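/- arXiv:1705.10024 — 10 statements merged into one kernel-verified Lean document; each statement's English description precedes it below -/
import Mathlib

section
/- Let G be a complete graph whose edges are each assigned a nonempty set of colors from {1,...,r} such that the coloring is transitive (if color i belongs to col(uv) and to col(vw), then i belongs to col(uw)). If every edge has at least t colors where r ≤ 2t and t < r, then the vertex set of G can be covered by at most r − t monochromatic components (a monochromatic component of color i is a connected component of the subgraph formed by edges whose color set contains i). -/
/-!
Fix a vertex `x`. It suffices to find a set `C` of `r - t` colours meeting `col x w` for every
`w ≠ x`: the components of `x` in the colours of `C` then cover `V`. If there is none, take two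
disjoint `(r - t)`-sets `C₁, C₂` (possible as `r ≤ 2t`) and vertices `w₁, w₂` with `col x wₖ`
missing `Cₖ`; as `|col x wₖ| ≥ t = |Cₖᶜ|`, in fact `col x wₖ = Cₖᶜ`. Transitivity makes `col w₁ w₂`
avoid the symmetric difference `C₁ ∪ C₂` of these two sets, leaving it at most `2t - r < t`
colours.
-/

namespace Finset

variable {α : Type*} [Fintype α] [DecidableEq α]

theorem exists_disjoint_card_eq_card_eq {k : ℕ} (hk : 2 * k ≤ Fintype.card α) :
    ∃ C D : Finset α, C.card = k ∧ D.card = k ∧ Disjoint C D := by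
  obtain ⟨C, -, hC⟩ := exists_subset_card_eq (s := (univ : Finset α)) (n := k)
    (by rw [card_univ]; omega)
  obtain ⟨D, hDC, hD⟩ := exists_subset_card_eq (s := Cᶜ) (n := k)
    (by rw [card_compl, hC]; omega)
  exact ⟨C, D, hC, hD, (subset_compl_iff_disjoint_right.mp hDC).symm⟩

theorem eq_compl_of_disjoint_of_card_le {A C : Finset α} (hAC : Disjoint A C)
    (hcard : Fintype.card α ≤ A.card + C.card) : A = Cᶜ :=
  eq_of_subset_of_card_le (subset_compl_iff_disjoint_right.mpr hAC)
    (by rw [card_compl]; omega)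

end Finset

open Finset

section TransitiveColouring

variable {V α : Type*} {col : V → V → Finset α}

theorem disjoint_col_symmDiff [DecidableEq α] (hsymm : ∀ u v, col u v = col v u)
    (htrans : ∀ u v w i, i ∈ col u v → i ∈ col v w → u ≠ w → i ∈ col u w)
    {x u v : V} (hxu : x ≠ u) (hxv : x ≠ v) :
    Disjoint (col u v) (symmDiff (col x u) (col x v)) := by
  refine disjoint_left.mpr fun i hi hmem => ?_
  rcases mem_symmDiff.mp hmem with ⟨hu, hv⟩ | ⟨hv, hu⟩
  · exact hv (htrans x u v i hu hi hxv)
  · exact hu (htrans x v u i hv (hsymm u v ▸ hi) hxu)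

theorem exists_card_eq_forall_not_disjoint_col [Fintype α] [DecidableEq α] {t : ℕ}
    (hsymm : ∀ u v, col u v = col v u)
    (htrans : ∀ u v w i, i ∈ col u v → i ∈ col v w → u ≠ w → i ∈ col u w)
    (hcard : ∀ u v, u ≠ v → t ≤ (col u v).card)
    (hr2t : Fintype.card α ≤ 2 * t) (htr : t < Fintype.card α) (x : V) :
    ∃ C : Finset α, C.card = Fintype.card α - t ∧ ∀ w, w ≠ x → ¬Disjoint (col x w) C := by
  by_contra! hmiss
  obtain ⟨C₁, C₂, hC₁, hC₂, hC₁₂⟩ :=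
    exists_disjoint_card_eq_card_eq (α := α) (k := Fintype.card α - t) (by omega)
  obtain ⟨w₁, hw₁, hd₁⟩ := hmiss C₁ hC₁
  obtain ⟨w₂, hw₂, hd₂⟩ := hmiss C₂ hC₂
  have hedge : ∃ u v, u ≠ v ∧ Disjoint (col u v) (C₁ ∪ C₂) := by
    by_cases hw : w₁ = w₂
    · subst hw
      exact ⟨x, w₁, hw₁.symm, disjoint_union_right.mpr ⟨hd₁, hd₂⟩⟩
    · have e₁ : col x w₁ = C₁ᶜ :=
        eq_compl_of_disjoint_of_card_le hd₁ (by have := hcard x w₁ hw₁.symm; omega)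
      have e₂ : col x w₂ = C₂ᶜ :=
        eq_compl_of_disjoint_of_card_le hd₂ (by have := hcard x w₂ hw₂.symm; omega)
      have h := disjoint_col_symmDiff hsymm htrans hw₁.symm hw₂.symm
      rw [e₁, e₂, compl_symmDiff_compl, hC₁₂.symmDiff_eq_sup] at h
      exact ⟨w₁, w₂, hw, h⟩
  obtain ⟨u, v, huv, hd⟩ := hedge
  have hsum := card_le_univ (col u v ∪ (C₁ ∪ C₂))
  rw [card_union_of_disjoint hd, card_union_of_disjoint hC₁₂] at hsum
  have := hcard u v huv
  omega

end TransitiveColouring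

theorem stmt_0_general {V : Type*} (r t : ℕ)
    (col : V → V → Finset (Fin r))
    (hsymm : ∀ u v : V, col u v = col v u)
    (htrans : ∀ u v w : V, ∀ i : Fin r,
      i ∈ col u v → i ∈ col v w → u ≠ w → i ∈ col u w)
    (hcard : ∀ u v : V, u ≠ v → t ≤ (col u v).card)
    (hr2t : r ≤ 2 * t) (htr : t < r) :
    ∃ S : Finset (V × Fin r), S.card ≤ r - t ∧
      ∀ u : V, ∃ p ∈ S, u = p.1 ∨ p.2 ∈ col u p.1 := by
  rcases isEmpty_or_nonempty V with hV | ⟨⟨x⟩⟩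
  · exact ⟨∅, by simp, fun u => hV.elim u⟩
  obtain ⟨C, hC, hhit⟩ := exists_card_eq_forall_not_disjoint_col hsymm htrans hcard
    (by rwa [Fintype.card_fin]) (by rwa [Fintype.card_fin]) x
  rw [Fintype.card_fin] at hC
  refine ⟨C.map (Function.Embedding.sectR x _), by rw [card_map, hC], fun u => ?_⟩
  by_cases hux : u = x
  · obtain ⟨i, hi⟩ : C.Nonempty := card_pos.mp (by omega)
    exact ⟨(x, i), mem_map_of_mem _ hi, Or.inl hux⟩
  · obtain ⟨i, hxu, hi⟩ := not_disjoint_iff.mp (hhit u hux)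
    exact ⟨(x, i), mem_map_of_mem _ hi, Or.inr (hsymm u x ▸ hxu)⟩

/-- In a multi r-edge-colored complete graph (transitive coloring),
if every edge has at least t colors with r ≤ 2t and t < r, then V(G) can be
covered by at most r − t monochromatic components. -/
theorem stmt_0 {V : Type*} [Fintype V] [DecidableEq V] (r t : ℕ)
    (col : V → V → Finset (Fin r))
    (hsymm : ∀ u v : V, col u v = col v u)
    (htrans : ∀ u v w : V, ∀ i : Fin r,
      i ∈ col u v → i ∈ col v w → u ≠ w → i ∈ col u w)
    (hcard : ∀ u v : V, u ≠ v → t ≤ (col u v).card)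
    (hr2t : r ≤ 2 * t) (htr : t < r) :
    ∃ S : Finset (V × Fin r), S.card ≤ r - t ∧
      ∀ u : V, ∃ p ∈ S, u = p.1 ∨ p.2 ∈ col u p.1 :=
  stmt_0_general r t col hsymm htrans hcard hr2t htr
end

section
/- If the generalized Ryser conjecture holds for intersection parameter t (i.e., every r-uniform r-partite t-intersecting hypergraph with t < r satisfies τ ≤ r − t, for all r > t), then it also holds for parameter t + 1: every r-uniform r-partite (t+1)-intersecting hypergraph with t + 1 < r satisfies τ ≤ r − (t+1). -/
/-!
Deleting the last vertex class of an `r`-partite hypergraph turns every edge into an edge of an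
`(r - 1)`-partite hypergraph on the remaining vertices. Two edges lose at most the one common
vertex they may have in the deleted class, so a `(t + 1)`-intersecting family becomes
`t`-intersecting, and a cover of size `(r - 1) - t` of the trace is a cover of size
`r - (t + 1)` of the original hypergraph.
-/

open Finset

namespace PartiteHypergraph

variable {V : Type*} {r : ℕ}

def IsPartite (P : V → Fin r) (H : Finset (Finset V)) : Prop :=
  ∀ e ∈ H, ∀ i : Fin r, (e.filter fun v => P v = i).card = 1

def IsIntersecting [DecidableEq V] (s : ℕ) (H : Finset (Finset V)) : Prop :=
  ∀ e ∈ H, ∀ f ∈ H, s ≤ (e ∩ f).card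

def IsCover (T : Finset V) (H : Finset (Finset V)) : Prop :=
  ∀ e ∈ H, ∃ v ∈ T, v ∈ e

lemma card_subtype_inter [DecidableEq V] (p : V → Prop) [DecidablePred p] (s t : Finset V) :
    (s.subtype p ∩ t.subtype p).card = ((s ∩ t).filter p).card := by
  rw [← card_map (Function.Embedding.subtype p), map_inter, subtype_map, subtype_map,
    filter_inter_distrib]

section DropLast

variable (P : V → Fin (r + 1))

abbrev NotLast : Type _ := {v : V // P v ≠ Fin.last r}

def castPredClass : NotLast P → Fin r := fun v => (P v).castPred v.2

def dropLast [DecidableEq V] (H : Finset (Finset V)) : Finset (Finset (NotLast P)) :=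
  H.image (·.subtype _)

variable {P}

lemma card_filter_castPredClass (e : Finset V) (i : Fin r) :
    ((e.subtype _).filter fun v => castPredClass P v = i).card
      = (e.filter fun v => P v = i.castSucc).card := by
  rw [← card_map (Function.Embedding.subtype _)]
  congr 1
  ext v
  simp only [mem_map, mem_filter, mem_subtype, Function.Embedding.subtype_apply, castPredClass,
    Fin.castPred_eq_iff_eq_castSucc]
  constructor
  · rintro ⟨w, ⟨hw, hPw⟩, rfl⟩
    exact ⟨hw, hPw⟩
  · rintro ⟨hv, hPv⟩
    exact ⟨⟨v, hPv ▸ Fin.castSucc_ne_last i⟩, ⟨hv, hPv⟩, rfl⟩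

lemma IsPartite.card_inter_le_card_subtype_inter_add_one {H : Finset (Finset V)}
    [DecidableEq V] (hH : IsPartite P H) {e : Finset V} (he : e ∈ H) (f : Finset V) :
    (e ∩ f).card ≤ (e.subtype (P · ≠ Fin.last r) ∩ f.subtype _).card + 1 := by
  have hlast : ((e ∩ f).filter fun v => ¬ P v ≠ Fin.last r).card ≤ 1 := by
    refine (card_le_card fun v hv => ?_).trans (hH e he (Fin.last r)).le
    simp_all
  rw [card_subtype_inter, ← card_filter_add_card_filter_not (p := fun v => P v ≠ Fin.last r)]
  omega

variable [DecidableEq V] {H : Finset (Finset V)}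

lemma IsPartite.dropLast (hH : IsPartite P H) : IsPartite (castPredClass P) (dropLast P H) := by
  simp only [IsPartite, PartiteHypergraph.dropLast, forall_mem_image]
  intro e he i
  rw [card_filter_castPredClass]
  exact hH e he _

lemma IsIntersecting.dropLast {s : ℕ} (hP : IsPartite P H) (hH : IsIntersecting (s + 1) H) :
    IsIntersecting s (dropLast P H) := by
  simp only [IsIntersecting, PartiteHypergraph.dropLast, forall_mem_image]
  intro e he f hf
  have := hH e he f hf
  have := hP.card_inter_le_card_subtype_inter_add_one he f
  omega

lemma IsCover.of_dropLast {T : Finset (NotLast P)} (hT : IsCover T (dropLast P H)) :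
    IsCover (T.map (Function.Embedding.subtype _)) H := by
  intro e he
  obtain ⟨v, hvT, hve⟩ := hT _ (mem_image_of_mem _ he)
  exact ⟨v, mem_map_of_mem _ hvT, mem_subtype.mp hve⟩

end DropLast

end PartiteHypergraph

open PartiteHypergraph in
/-- If the generalized Ryser conjecture holds for intersection
parameter t (every r-uniform r-partite t-intersecting hypergraph with t < r has
τ ≤ r − t), then it holds for parameter t + 1. -/
theorem stmt_3 (t : ℕ)
    (ih : ∀ (V : Type) [DecidableEq V] (r : ℕ) (H : Finset (Finset V))
      (P : V → Fin r),
      (∀ e ∈ H, ∀ i : Fin r, (e.filter fun v => P v = i).card = 1) →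
      (∀ e ∈ H, ∀ f ∈ H, t ≤ (e ∩ f).card) → t < r →
      ∃ T : Finset V, T.card ≤ r - t ∧ ∀ e ∈ H, ∃ v ∈ T, v ∈ e) :
    ∀ (V : Type) [DecidableEq V] (r : ℕ) (H : Finset (Finset V))
      (P : V → Fin r),
      (∀ e ∈ H, ∀ i : Fin r, (e.filter fun v => P v = i).card = 1) →
      (∀ e ∈ H, ∀ f ∈ H, t + 1 ≤ (e ∩ f).card) → t + 1 < r →
      ∃ T : Finset V, T.card ≤ r - (t + 1) ∧ ∀ e ∈ H, ∃ v ∈ T, v ∈ e := by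
  intro V _ r H P hP hH hr
  obtain ⟨r, rfl⟩ : ∃ r', r = r' + 1 := ⟨r - 1, by omega⟩
  obtain ⟨T, hTcard, hT⟩ := ih (NotLast P) r (dropLast P H) (castPredClass P)
    (IsPartite.dropLast hP) (IsIntersecting.dropLast hP hH) (by omega)
  refine ⟨T.map (Function.Embedding.subtype _), ?_, IsCover.of_dropLast hT⟩
  rw [card_map]
  omega
end

section
/- Let G be a multi r-edge-colored complete graph (transitive coloring) in which every edge has at least t colors, with t + 1 ≤ r ≤ 4t − 1, and suppose there exists an edge xy with t < |col(xy)| < r. Then V(G) can be covered by at most r − t monochromatic components. -/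
/-!
Write `C = col x y`. For a vertex `u ∉ {x, y}`, transitivity on the triangle `uxy` makes
`col u x` and `col u y` meet `C` in the same set `col u x ∩ col u y`. Cover by the components
of `x` in the colours of `A` and of `y` in the colours of `B`. If `u` is missed, `col u x` avoids
`A` and `col u y` avoids `B`, whence
`2t ≤ |col u x| + |col u y| ≤ 2 |C \ (A ∪ B)| + |Cᶜ \ (A ∩ B)|`.
So a colour of `C` placed at `x` alone lowers the bound by two, and a colour outside `C`
placed at both `x` and `y` lowers it by one. Taking `A = K ∪ J`, `B = J` with `K ⊆ C` of size
`min |C| (r - t)` and `J ⊆ Cᶜ` of size `(r - t - |K|) / 2` spends at most `r - t` components,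
and `t < |C| < r ≤ 4t - 1` pushes the bound below `2t`.
-/

open Finset

namespace Finset

variable {α : Type*} [Fintype α] [DecidableEq α]

theorem card_add_card_le_of_inter_subset {P Q C A B : Finset α}
    (hPQ : P ∩ Q ⊆ C) (hPC : P ∩ C ⊆ Q) (hQC : Q ∩ C ⊆ P)
    (hPA : Disjoint P A) (hQB : Disjoint Q B) :
    #P + #Q ≤ 2 * #(C \ (A ∪ B)) + #(Cᶜ \ (A ∩ B)) := by
  have hmeet : (P ∪ Q) ∩ C = P ∩ Q := by
    ext i
    simp only [mem_inter, mem_union]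
    exact ⟨fun ⟨h, hC⟩ => h.elim (fun hP => ⟨hP, hPC (mem_inter.2 ⟨hP, hC⟩)⟩)
      (fun hQ => ⟨hQC (mem_inter.2 ⟨hQ, hC⟩), hQ⟩), fun h => ⟨Or.inl h.1, hPQ (mem_inter.2 h)⟩⟩
  have hinter : P ∩ Q ⊆ C \ (A ∪ B) := fun i hi => by
    simp only [mem_inter] at hi
    simp [hPQ (mem_inter.2 hi), disjoint_left.1 hPA hi.1, disjoint_left.1 hQB hi.2]
  have hout : (P ∪ Q) \ C ⊆ Cᶜ \ (A ∩ B) := fun i hi => by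
    simp only [mem_sdiff, mem_union] at hi
    rcases hi with ⟨hi | hi, hiC⟩
    · simp [hiC, disjoint_left.1 hPA hi]
    · simp [hiC, disjoint_left.1 hQB hi]
  calc #P + #Q = #((P ∪ Q) \ C) + 2 * #(P ∩ Q) := by
        rw [← card_union_add_card_inter, ← card_sdiff_add_card_inter (P ∪ Q) C, hmeet]
        ring
    _ ≤ #(Cᶜ \ (A ∩ B)) + 2 * #(C \ (A ∪ B)) := by
        gcongr
    _ = 2 * #(C \ (A ∪ B)) + #(Cᶜ \ (A ∩ B)) := add_comm _ _

end Finset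

def IsTransitiveMultiColoring {V α : Type*} (col : V → V → Finset α) : Prop :=
  (∀ u v, col u v = col v u) ∧ ∀ u v w i, i ∈ col u v → i ∈ col v w → u ≠ w → i ∈ col u w

namespace IsTransitiveMultiColoring

variable {V α : Type*} {col : V → V → Finset α}

theorem inter_subset [DecidableEq α] (hcol : IsTransitiveMultiColoring col) {u v w : V}
    (huw : u ≠ w) : col u v ∩ col v w ⊆ col u w := fun i hi =>
  hcol.2 u v w i (mem_inter.1 hi).1 (mem_inter.1 hi).2 huw

theorem exists_mem_cover [DecidableEq V] [Fintype α] [DecidableEq α]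
    (hcol : IsTransitiveMultiColoring col) {t : ℕ} (hcard : ∀ u v, u ≠ v → t ≤ #(col u v))
    {x y : V} (hxy : x ≠ y) {A B : Finset α} (hA : (A ∩ col x y).Nonempty)
    (hAB : 2 * #(col x y \ (A ∪ B)) + #((col x y)ᶜ \ (A ∩ B)) < 2 * t) (u : V) :
    ∃ p ∈ A.image (x, ·) ∪ B.image (y, ·), u = p.1 ∨ p.2 ∈ col u p.1 := by
  obtain ⟨i, hi⟩ := hA
  obtain ⟨hiA, hiC⟩ := mem_inter.1 hi
  have hxi : (x, i) ∈ A.image (x, ·) ∪ B.image (y, ·) := mem_union_left _ (mem_image_of_mem _ hiA)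
  by_cases hux : u = x
  · exact ⟨_, hxi, Or.inl hux⟩
  by_cases huy : u = y
  · exact ⟨_, hxi, Or.inr (by rwa [huy, hcol.1])⟩
  by_contra hmiss
  have hPA : Disjoint (col u x) A := disjoint_right.2 fun j hj hjP =>
    hmiss ⟨(x, j), mem_union_left _ (mem_image_of_mem _ hj), Or.inr hjP⟩
  have hQB : Disjoint (col u y) B := disjoint_right.2 fun j hj hjQ =>
    hmiss ⟨(y, j), mem_union_right _ (mem_image_of_mem _ hj), Or.inr hjQ⟩
  have hPQ : col u x ∩ col u y ⊆ col x y := by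
    rw [hcol.1 u x]; exact hcol.inter_subset hxy
  have hQC : col u y ∩ col x y ⊆ col u x := by
    rw [hcol.1 x y]; exact hcol.inter_subset hux
  have hsum := card_add_card_le_of_inter_subset hPQ (hcol.inter_subset huy) hQC hPA hQB
  have hPt := hcard u x hux
  have hQt := hcard u y huy
  omega

end IsTransitiveMultiColoring

theorem stmt_4_general {V : Type*} (r t : ℕ)
    (col : V → V → Finset (Fin r))
    (hsymm : ∀ u v : V, col u v = col v u)
    (htrans : ∀ u v w : V, ∀ i : Fin r,
      i ∈ col u v → i ∈ col v w → u ≠ w → i ∈ col u w)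
    (hcard : ∀ u v : V, u ≠ v → t ≤ (col u v).card)
    (hlow : t + 1 ≤ r) (hhigh : r ≤ 4 * t - 1)
    (x y : V) (hxy : x ≠ y)
    (hxylow : t < (col x y).card) (hxyhigh : (col x y).card < r) :
    ∃ S : Finset (V × Fin r), S.card ≤ r - t ∧
      ∀ u : V, ∃ p ∈ S, u = p.1 ∨ p.2 ∈ col u p.1 := by
  classical
  set C := col x y
  have hCc : #Cᶜ = r - #C := by rw [card_compl, Fintype.card_fin]
  obtain ⟨K, hKC, hK⟩ := exists_subset_card_eq (min_le_left #C (r - t))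
  obtain ⟨J, hJC, hJ⟩ := exists_subset_card_eq (s := Cᶜ) (n := (r - t - #K) / 2) (by omega)
  have hKne : ((K ∪ J) ∩ C).Nonempty := by
    rw [union_inter_distrib_right, inter_eq_left.2 hKC]
    exact (card_pos.1 (by omega)).mono subset_union_left
  have hbound : 2 * #(C \ (K ∪ J ∪ J)) + #(Cᶜ \ ((K ∪ J) ∩ J)) < 2 * t := by
    have hsub : C \ (K ∪ J ∪ J) ⊆ C \ K :=
      sdiff_subset_sdiff subset_rfl (subset_union_left.trans subset_union_left)
    have hCK := card_le_card hsub
    rw [card_sdiff_of_subset hKC] at hCK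
    rw [union_inter_cancel_right, card_sdiff_of_subset hJC]
    omega
  refine ⟨_, ?_, IsTransitiveMultiColoring.exists_mem_cover ⟨hsymm, htrans⟩ hcard hxy hKne hbound⟩
  calc #((K ∪ J).image (x, ·) ∪ J.image (y, ·))
      ≤ #(K ∪ J) + #J := (card_union_le _ _).trans (add_le_add card_image_le card_image_le)
    _ ≤ r - t := by have := card_union_le K J; omega

/-- Multi r-edge-colored complete graph, every edge with at least
t colors, t + 1 ≤ r ≤ 4t − 1, and some edge xy has t < |col(xy)| < r colors.
Then V(G) can be covered by at most r − t monochromatic components. -/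
theorem stmt_4 {V : Type*} [Fintype V] [DecidableEq V] (r t : ℕ)
    (col : V → V → Finset (Fin r))
    (hsymm : ∀ u v : V, col u v = col v u)
    (htrans : ∀ u v w : V, ∀ i : Fin r,
      i ∈ col u v → i ∈ col v w → u ≠ w → i ∈ col u w)
    (hcard : ∀ u v : V, u ≠ v → t ≤ (col u v).card)
    (hlow : t + 1 ≤ r) (hhigh : r ≤ 4 * t - 1)
    (x y : V) (hxy : x ≠ y)
    (hxylow : t < (col x y).card) (hxyhigh : (col x y).card < r) :
    ∃ S : Finset (V × Fin r), S.card ≤ r - t ∧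
      ∀ u : V, ∃ p ∈ S, u = p.1 ∨ p.2 ∈ col u p.1 :=
  stmt_4_general r t col hsymm htrans hcard hlow hhigh x y hxy hxylow hxyhigh
end

section
/- Let G be a multi r-edge-colored complete graph on n vertices with r ≥ 2 (colors {1,...,r}, transitive coloring, every edge has at least one color). Then there exist r − 1 monochromatic components of pairwise different colors, all containing a common vertex, whose union has size at least (1 − (r−2)/(r−1)²)·n. -/
/-!
Write `Eᵢ(v)` for the exclusive `i`-neighbourhood of `v`: the vertices joined to `v` by the colour
set exactly `{i}`. Every vertex outside `Eᵢ(v)` lies in a component through `v` of a colour other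
than `i`, so it suffices to find `v` and `i` with `(r - 1)² |Eᵢ(v)| ≤ (r - 2) n`.

Suppose there are none. A component `C` of colour `c` through `v` is disjoint from the `Eᵢ(v)` with
`i ≠ c`, so `(r - 1) |C| < n`. As `E_c(x) ⊆ C` for `x ∈ C`, every `x ∈ C` then misses fewer than
`|C| / (r - 1)` vertices of `C` by exclusive `c`-edges, and greedily `C` contains an `r`-clique `T`
of exclusive `c`-edges. Every vertex lies in some component through `x`, and `x` in all `r` of
them, while for `i ≠ c` the `i`-components through distinct vertices of `T` are disjoint; counting
gives `r |C| ≥ n + r (r - 1)`. So the `i`-components through the vertices of a `c`-clique are `r`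
disjoint sets of more than `n / r` vertices each.
-/

open Finset

theorem SimpleGraph.exists_isNClique_of_mul_card_nonAdj_lt {V : Type*} [DecidableEq V]
    (G : SimpleGraph V) [DecidableRel G.Adj] {s : Finset V} (hs : s.Nonempty) {k : ℕ}
    (h : ∀ x ∈ s, (k - 1) * #{y ∈ s | ¬G.Adj x y} < #s) :
    ∃ t ⊆ s, G.IsNClique k t := by
  suffices ∀ j ≤ k, ∃ t ⊆ s, G.IsNClique j t from this k le_rfl
  intro j hj
  induction j with
  | zero => exact ⟨∅, empty_subset s, by simp⟩
  | succ j ih =>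
    obtain ⟨t, hts, ht⟩ := ih (by omega)
    obtain ⟨w, hws, hw⟩ : ∃ w ∈ s, ∀ x ∈ t, G.Adj x w := by
      by_contra! hcover
      have ht0 : t.Nonempty := by
        obtain ⟨w, hw⟩ := hs
        obtain ⟨x, hx, -⟩ := hcover w hw
        exact ⟨x, hx⟩
      have hsub : s ⊆ t.biUnion fun x => {y ∈ s | ¬G.Adj x y} := fun w hw => by
        obtain ⟨x, hx, hxw⟩ := hcover w hw
        exact mem_biUnion.2 ⟨x, hx, mem_filter.2 ⟨hw, hxw⟩⟩
      have : (k - 1) * #s < (k - 1) * #s :=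
        calc (k - 1) * #s
            ≤ (k - 1) * ∑ x ∈ t, #{y ∈ s | ¬G.Adj x y} :=
              Nat.mul_le_mul_left _ ((card_le_card hsub).trans card_biUnion_le)
          _ = ∑ x ∈ t, (k - 1) * #{y ∈ s | ¬G.Adj x y} := mul_sum _ _ _
          _ < ∑ _x ∈ t, #s := sum_lt_sum_of_nonempty ht0 fun x hx => h x (hts hx)
          _ = j * #s := by rw [sum_const, ht.card_eq, smul_eq_mul]
          _ ≤ (k - 1) * #s := Nat.mul_le_mul_right _ (by omega)
      exact lt_irrefl _ this
    exact ⟨insert w t, insert_subset hws hts, ht.insert fun x hx => (hw x hx).symm⟩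

namespace MultiColoring

variable {V κ : Type*} [Fintype V] [DecidableEq V] [DecidableEq κ] {col : V → V → Finset κ}

def IsTransitive (col : V → V → Finset κ) : Prop :=
  ∀ u v w : V, ∀ i : κ, i ∈ col u v → i ∈ col v w → u ≠ w → i ∈ col u w

def component (col : V → V → Finset κ) (i : κ) (v : V) : Finset V :=
  {u | u = v ∨ i ∈ col u v}

def exclusiveNbhd (col : V → V → Finset κ) (i : κ) (v : V) : Finset V :=
  {u | u ≠ v ∧ col u v = {i}}

def exclusiveGraph (col : V → V → Finset κ) (i : κ) : SimpleGraph V :=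
  .fromRel fun u v => col u v = {i}

instance (i : κ) : DecidableRel (exclusiveGraph col i).Adj := fun u v =>
  inferInstanceAs (Decidable (u ≠ v ∧ (col u v = {i} ∨ col v u = {i})))

variable {i c : κ} {u v x y : V}

@[simp]
theorem mem_component : u ∈ component col i v ↔ u = v ∨ i ∈ col u v := by
  simp [component]

theorem self_mem_component : v ∈ component col i v := mem_component.2 (.inl rfl)

@[simp]
theorem mem_exclusiveNbhd : u ∈ exclusiveNbhd col i v ↔ u ≠ v ∧ col u v = {i} := by
  simp [exclusiveNbhd]

theorem exclusiveNbhd_subset_component : exclusiveNbhd col i v ⊆ component col i v := by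
  intro u hu
  rw [mem_exclusiveNbhd] at hu
  simp [hu.2]

theorem disjoint_component_exclusiveNbhd (h : i ≠ c) :
    Disjoint (component col c v) (exclusiveNbhd col i v) := by
  refine disjoint_right.2 fun u hu => ?_
  rw [mem_exclusiveNbhd] at hu
  simp [hu.1, hu.2, Ne.symm h]

theorem disjoint_exclusiveNbhd (h : i ≠ c) :
    Disjoint (exclusiveNbhd col c v) (exclusiveNbhd col i v) :=
  (disjoint_component_exclusiveNbhd h).mono_left exclusiveNbhd_subset_component

theorem exclusiveGraph_adj (hsymm : ∀ u v : V, col u v = col v u) :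
    (exclusiveGraph col c).Adj x y ↔ y ∈ exclusiveNbhd col c x := by
  rw [exclusiveGraph, SimpleGraph.fromRel_adj, mem_exclusiveNbhd, hsymm y x, or_self, ne_comm]

theorem mem_component_comm (hsymm : ∀ u v : V, col u v = col v u) :
    u ∈ component col c v ↔ v ∈ component col c u := by
  simp only [mem_component, hsymm u v, eq_comm]

section

variable (htrans : IsTransitive col)
include htrans

theorem mem_component_trans {w : V} (huw : u ∈ component col c w)
    (hwv : w ∈ component col c v) : u ∈ component col c v := by
  rw [mem_component] at *
  rcases huw with rfl | huw
  · exact hwv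
  rcases hwv with rfl | hwv
  · exact .inr huw
  by_cases huv : u = v
  · exact .inl huv
  · exact .inr (htrans u w v c huw hwv huv)

variable (hsymm : ∀ u v : V, col u v = col v u)
include hsymm

theorem component_eq_of_mem (hx : x ∈ component col c v) :
    component col c x = component col c v := by
  ext u
  exact ⟨fun hu => mem_component_trans htrans hu hx, fun hu =>
    mem_component_trans htrans hu ((mem_component_comm hsymm).1 hx)⟩

theorem disjoint_component (hxy : x ≠ y) (hi : i ∉ col x y) :
    Disjoint (component col i x) (component col i y) := by
  refine disjoint_left.2 fun z hzx hzy => ?_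
  have hxy' := mem_component_trans htrans ((mem_component_comm hsymm).1 hzx) hzy
  rw [mem_component] at hxy'
  exact hxy'.elim hxy hi

theorem card_filter_not_exclusiveGraph_adj (hx : x ∈ component col c v) :
    #{y ∈ component col c v | ¬(exclusiveGraph col c).Adj x y} =
      #(component col c v) - #(exclusiveNbhd col c x) := by
  have hadj :
      {y ∈ component col c v | (exclusiveGraph col c).Adj x y} = exclusiveNbhd col c x := by
    ext y
    rw [mem_filter, exclusiveGraph_adj hsymm, ← component_eq_of_mem htrans hsymm hx]
    exact ⟨And.right, fun hy => ⟨exclusiveNbhd_subset_component hy, hy⟩⟩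
  rw [← card_filter_add_card_filter_not (s := component col c v) ((exclusiveGraph col c).Adj x),
    hadj, Nat.add_sub_cancel_left]

theorem sum_card_component_le_of_isClique {T : Finset V}
    (hT : (exclusiveGraph col c).IsClique (T : Set V)) (hi : i ≠ c) :
    ∑ x ∈ T, #(component col i x) ≤ Fintype.card V := by
  rw [← card_biUnion]
  · exact card_le_univ _
  intro x hx y hy hxy
  refine disjoint_component htrans hsymm hxy ?_
  rw [hsymm, (mem_exclusiveNbhd.1 ((exclusiveGraph_adj hsymm).1 (hT hx hy hxy))).2, mem_singleton]
  exact hi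

end

variable [Fintype κ]

theorem card_component_add_sum_card_exclusiveNbhd_le (c : κ) (v : V) :
    #(component col c v) + ∑ i ∈ univ.erase c, #(exclusiveNbhd col i v) ≤ Fintype.card V := by
  have hdisj : ((univ.erase c : Finset κ) : Set κ).PairwiseDisjoint (exclusiveNbhd col · v) :=
    fun i _ j _ hij => disjoint_exclusiveNbhd (Ne.symm hij)
  rw [← card_biUnion hdisj, ← card_union_of_disjoint]
  · exact card_le_univ _
  · exact (disjoint_biUnion_right _ _ _).2 fun i hi =>
      disjoint_component_exclusiveNbhd (ne_of_mem_erase hi)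

theorem card_add_card_le_sum_card_component (hne : ∀ u v : V, u ≠ v → (col u v).Nonempty)
    (x : V) : Fintype.card V + Fintype.card κ ≤ ∑ i, #(component col i x) + 1 := by
  have hswap : ∑ i, #(component col i x) = ∑ u, #{i | u ∈ component col i x} := by
    simp only [component, card_filter, mem_filter, mem_univ, true_and]
    exact sum_comm
  have hother : ∀ u ∈ univ.erase x, 1 ≤ #{i | u ∈ component col i x} := fun u hu => by
    obtain ⟨i, hi⟩ := hne u x (ne_of_mem_erase hu)
    exact card_pos.2 ⟨i, by simp [hi]⟩
  have hself : #{i | x ∈ component col i x} = Fintype.card κ := by simp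
  have hsum := card_nsmul_le_sum _ _ _ hother
  rw [card_erase_of_mem (mem_univ x), card_univ, smul_eq_mul, mul_one] at hsum
  rw [hswap, ← add_sum_erase _ _ (mem_univ x), hself]
  have hV := Fintype.card_pos_iff.2 ⟨x⟩
  omega

theorem mul_card_component_lt (hκ : 2 ≤ Fintype.card κ) (c : κ)
    (hlarge : ∀ i, (Fintype.card κ - 2) * Fintype.card V <
      (Fintype.card κ - 1) ^ 2 * #(exclusiveNbhd col i v)) :
    (Fintype.card κ - 1) * #(component col c v) < Fintype.card V := by
  have hcount := card_component_add_sum_card_exclusiveNbhd_le (col := col) c v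
  have hothers : (Fintype.card κ - 1) * ((Fintype.card κ - 2) * Fintype.card V) <
      (Fintype.card κ - 1) ^ 2 * ∑ i ∈ univ.erase c, #(exclusiveNbhd col i v) :=
    calc (Fintype.card κ - 1) * ((Fintype.card κ - 2) * Fintype.card V)
        = ∑ _i ∈ univ.erase c, (Fintype.card κ - 2) * Fintype.card V := by
          rw [sum_const, card_erase_of_mem (mem_univ c), card_univ, smul_eq_mul]
      _ < ∑ i ∈ univ.erase c, (Fintype.card κ - 1) ^ 2 * #(exclusiveNbhd col i v) :=
          sum_lt_sum_of_nonempty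
            (card_pos.1 (by rw [card_erase_of_mem (mem_univ c), card_univ]; omega))
            fun i _ => hlarge i
      _ = _ := (mul_sum _ _ _).symm
  generalize Fintype.card κ = r at *
  obtain ⟨b, rfl⟩ : ∃ b, r = b + 2 := ⟨r - 2, by omega⟩
  simp only [Nat.add_sub_cancel, show b + 2 - 1 = b + 1 by omega] at *
  nlinarith

section

variable (htrans : IsTransitive col) (hsymm : ∀ u v : V, col u v = col v u)
include htrans hsymm

theorem card_add_le_mul_card_component (hne : ∀ u v : V, u ≠ v → (col u v).Nonempty)
    {T : Finset V} (hTs : T ⊆ component col c v)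
    (hT : (exclusiveGraph col c).IsNClique (Fintype.card κ) T) :
    Fintype.card V + Fintype.card κ * (Fintype.card κ - 1) ≤
      Fintype.card κ * #(component col c v) := by
  have hothers : ∑ i ∈ univ.erase c, ∑ x ∈ T, #(component col i x) ≤
      (Fintype.card κ - 1) * Fintype.card V :=
    calc ∑ i ∈ univ.erase c, ∑ x ∈ T, #(component col i x)
        ≤ ∑ _i ∈ univ.erase c, Fintype.card V := sum_le_sum fun i hi =>
          sum_card_component_le_of_isClique htrans hsymm hT.isClique (ne_of_mem_erase hi)
      _ = (Fintype.card κ - 1) * Fintype.card V := by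
          rw [sum_const, card_erase_of_mem (mem_univ c), card_univ, smul_eq_mul]
  have hsame : ∑ x ∈ T, #(component col c x) = Fintype.card κ * #(component col c v) := by
    rw [sum_congr rfl fun x hx => congrArg card (component_eq_of_mem htrans hsymm (hTs hx)),
      sum_const, hT.card_eq, smul_eq_mul]
  have hcount : Fintype.card κ * (Fintype.card V + Fintype.card κ) ≤
      Fintype.card κ * #(component col c v) +
        ∑ i ∈ univ.erase c, ∑ x ∈ T, #(component col i x) + Fintype.card κ := by
    have := sum_le_sum fun x (_ : x ∈ T) => card_add_card_le_sum_card_component hne x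
    rwa [sum_const, hT.card_eq, smul_eq_mul, sum_add_distrib, sum_comm,
      ← add_sum_erase _ _ (mem_univ c), hsame, sum_const, hT.card_eq, smul_eq_mul,
      mul_one] at this
  have hκ : 1 ≤ Fintype.card κ := Fintype.card_pos_iff.2 ⟨c⟩
  generalize Fintype.card κ = r at *
  obtain ⟨b, rfl⟩ : ∃ b, r = b + 1 := ⟨r - 1, by omega⟩
  simp only [Nat.add_sub_cancel] at *
  nlinarith

theorem exists_isNClique_subset_component (hκ : 2 ≤ Fintype.card κ)
    (hlarge : ∀ x ∈ component col c v, (Fintype.card κ - 2) * Fintype.card V <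
      (Fintype.card κ - 1) ^ 2 * #(exclusiveNbhd col c x))
    (hsmall : (Fintype.card κ - 1) * #(component col c v) < Fintype.card V) :
    ∃ T ⊆ component col c v, (exclusiveGraph col c).IsNClique (Fintype.card κ) T := by
  refine (exclusiveGraph col c).exists_isNClique_of_mul_card_nonAdj_lt ⟨v, self_mem_component⟩
    fun x hx => ?_
  have hsub : #(exclusiveNbhd col c x) ≤ #(component col c v) := card_le_card <| by
    rw [← component_eq_of_mem htrans hsymm hx]; exact exclusiveNbhd_subset_component
  rw [card_filter_not_exclusiveGraph_adj htrans hsymm hx]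
  have hxlarge := hlarge x hx
  obtain ⟨d, hd⟩ : ∃ d, #(component col c v) = #(exclusiveNbhd col c x) + d :=
    ⟨_, (Nat.add_sub_of_le hsub).symm⟩
  generalize Fintype.card κ = r at *
  obtain ⟨b, rfl⟩ : ∃ b, r = b + 2 := ⟨r - 2, by omega⟩
  simp only [Nat.add_sub_cancel, show b + 2 - 1 = b + 1 by omega, hd,
    Nat.add_sub_cancel_left] at *
  nlinarith

theorem exists_card_exclusiveNbhd_le [Nonempty V] (hκ : 2 ≤ Fintype.card κ)
    (hne : ∀ u v : V, u ≠ v → (col u v).Nonempty) :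
    ∃ v i, (Fintype.card κ - 1) ^ 2 * #(exclusiveNbhd col i v) ≤
      (Fintype.card κ - 2) * Fintype.card V := by
  by_contra! hlarge
  have hclique : ∀ c v, ∃ T ⊆ component col c v,
      (exclusiveGraph col c).IsNClique (Fintype.card κ) T := fun c v =>
    exists_isNClique_subset_component htrans hsymm hκ (fun x _ => hlarge x c)
      (mul_card_component_lt hκ c (hlarge v))
  have hbig : ∀ c v, Fintype.card V + Fintype.card κ * (Fintype.card κ - 1) ≤
      Fintype.card κ * #(component col c v) := fun c v => by
    obtain ⟨T, hTs, hT⟩ := hclique c v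
    exact card_add_le_mul_card_component htrans hsymm hne hTs hT
  obtain ⟨c, i, hci⟩ := Fintype.exists_pair_of_one_lt_card hκ
  obtain ⟨T, -, hT⟩ := hclique c (Classical.arbitrary V)
  have hdisj := sum_card_component_le_of_isClique htrans hsymm hT.isClique hci.symm
  have hsum := sum_le_sum fun x (_ : x ∈ T) => hbig i x
  rw [← mul_sum, sum_const, hT.card_eq, smul_eq_mul] at hsum
  have hbound := Nat.le_of_mul_le_mul_left hsum (by omega)
  have hpos : 0 < Fintype.card κ * (Fintype.card κ - 1) := Nat.mul_pos (by omega) (by omega)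
  omega

end

theorem card_sub_card_exclusiveNbhd_le_ncard (hne : ∀ u v : V, u ≠ v → (col u v).Nonempty)
    (i : κ) (v : V) :
    Fintype.card V - #(exclusiveNbhd col i v) ≤
      {u | u = v ∨ ∃ j ∈ univ.erase i, j ∈ col u v}.ncard := by
  rw [← card_compl, ← Set.ncard_coe_finset]
  refine Set.ncard_le_ncard (fun u hu => ?_)
  simp only [coe_compl, Set.mem_compl_iff, mem_coe, mem_exclusiveNbhd, not_and] at hu
  by_cases huv : u = v
  · exact .inl huv
  obtain ⟨j, hj, hji⟩ : ∃ j ∈ col u v, j ≠ i := by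
    by_contra! h
    exact hu huv ((hne u v huv).subset_singleton_iff.1 (subset_singleton_iff'.2 h))
  exact .inr ⟨j, mem_erase.2 ⟨hji, mem_univ j⟩, hj⟩

end MultiColoring

/-- In a multi r-edge-colored complete graph on n vertices (r ≥ 2),
there are r − 1 monochromatic components of pairwise different colors, all
containing a common vertex v, whose union has at least (1 − (r−2)/(r−1)²)·n
vertices. -/
theorem stmt_6 {V : Type*} [Fintype V] [DecidableEq V] [Nonempty V] (r : ℕ)
    (hr : 2 ≤ r)
    (col : V → V → Finset (Fin r))
    (hsymm : ∀ u v : V, col u v = col v u)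
    (hne : ∀ u v : V, u ≠ v → (col u v).Nonempty)
    (htrans : ∀ u v w : V, ∀ i : Fin r,
      i ∈ col u v → i ∈ col v w → u ≠ w → i ∈ col u w) :
    ∃ (v : V) (I : Finset (Fin r)), I.card = r - 1 ∧
      (1 - ((r : ℝ) - 2) / ((r : ℝ) - 1) ^ 2) * Fintype.card V ≤
        Set.ncard {u : V | u = v ∨ ∃ i ∈ I, i ∈ col u v} := by
  obtain ⟨v, i, hsmall⟩ := MultiColoring.exists_card_exclusiveNbhd_le htrans hsymm
    (by rwa [Fintype.card_fin]) hne
  refine ⟨v, univ.erase i, by simp, ?_⟩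
  have hcover := MultiColoring.card_sub_card_exclusiveNbhd_le_ncard hne i v
  set e := #(MultiColoring.exclusiveNbhd col i v)
  have hle : e ≤ Fintype.card V := card_le_univ _
  have hsmall' : ((r : ℝ) - 1) ^ 2 * e ≤ ((r : ℝ) - 2) * Fintype.card V := by
    rw [Fintype.card_fin] at hsmall
    have := (Nat.cast_le (α := ℝ)).2 hsmall
    push_cast [Nat.cast_sub (by omega : 1 ≤ r), Nat.cast_sub hr] at this
    exact this
  have hr' : (2 : ℝ) ≤ r := by exact_mod_cast hr
  have he : (e : ℝ) ≤ ((r : ℝ) - 2) / ((r : ℝ) - 1) ^ 2 * Fintype.card V := by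
    rw [div_mul_eq_mul_div, le_div_iff₀ (by nlinarith)]
    linarith
  calc (1 - ((r : ℝ) - 2) / ((r : ℝ) - 1) ^ 2) * (Fintype.card V : ℝ)
      ≤ (Fintype.card V : ℝ) - e := by linarith
    _ ≤ _ := by
      rw [← Nat.cast_sub hle]
      exact_mod_cast hcover
end

section
/- Let G be a multi r-edge-colored complete graph on n vertices with r ≥ 3, transitive coloring, such that each color i has exactly k_i monochromatic components with 2 ≤ k_i ≤ r − 1 for all i. Then Σ_{i=1}^r m_i ≤ r(r−2)n²/(2(r−1)²), where m_i is the number of edges whose color set is exactly {i}. -/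
/-!
For a colour `i`, the relation "equal or joined by an edge containing `i`" is an equivalence
(transitivity of the colouring) with `k i ≤ r - 1` classes, so by Cauchy–Schwarz over the classes
at least `n² / (r - 1)` ordered pairs are related. Summing over colours, `∑ M i ≥ r n² / (r - 1)`,
where `M i` counts related pairs, diagonal included. On the other hand every ordered pair
contributes at most `r` to `∑ M i`, and exactly `1` when it is a monochromatic edge, so
`∑ M i + (r - 1) ∑ m i ≤ r n²`. Eliminating `∑ M i` gives `(r - 1)² ∑ m i ≤ r (r - 2) n²`.
-/

open Finset

theorem sq_card_le_card_image_mul_card_collisions {V β : Type*} [Fintype V] [DecidableEq β]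
    (f : V → β) : Fintype.card V ^ 2 ≤ #(univ.image f) * #{p : V × V | f p.1 = f p.2} := by
  have hmaps : ∀ v ∈ (univ : Finset V), f v ∈ univ.image f :=
    fun v _ => mem_image_of_mem f (mem_univ v)
  have hV : Fintype.card V = ∑ b ∈ univ.image f, #{v | f v = b} := by
    rw [← card_univ, card_eq_sum_card_fiberwise hmaps]
  have hpairs : #{p : V × V | f p.1 = f p.2} = ∑ b ∈ univ.image f, #{v | f v = b} ^ 2 := by
    rw [card_eq_sum_card_fiberwise (f := fun p : V × V => f p.1) fun p _ => hmaps p.1 (mem_univ _)]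
    refine sum_congr rfl fun b _ => ?_
    rw [sq, ← card_product]
    congr 1
    ext ⟨u, v⟩
    simp only [mem_filter, mem_univ, true_and, mem_product]
    constructor
    · rintro ⟨huv, rfl⟩; exact ⟨rfl, huv.symm⟩
    · rintro ⟨rfl, hv⟩; exact ⟨hv.symm, rfl⟩
  rw [hV, hpairs]
  exact sq_sum_le_card_mul_sum_sq

theorem Setoid.sq_card_le_ncard_classes_mul {V : Type*} [Fintype V] (s : Setoid V)
    [DecidableRel s] : Fintype.card V ^ 2 ≤ s.classes.ncard * #{p : V × V | s p.1 p.2} := by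
  classical
  have hclasses : #(univ.image (Quotient.mk s)) = s.classes.ncard := by
    rw [image_univ_of_surjective Quotient.mk_surjective, card_univ, ← Nat.card_eq_fintype_card,
      Nat.card_congr s.quotientEquivClasses, Nat.card_coe_set_eq]
  simpa only [hclasses, Quotient.eq] using sq_card_le_card_image_mul_card_collisions (Quotient.mk s)

theorem card_add_mul_card_filter_eq_singleton_le {ι : Type*} [Fintype ι] [DecidableEq ι]
    (s : Finset ι) : #s + (Fintype.card ι - 1) * #{i | s = {i}} ≤ Fintype.card ι := by
  by_cases hs : ∃ j, s = {j}
  · obtain ⟨j, rfl⟩ := hs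
    have : 0 < Fintype.card ι := Fintype.card_pos_iff.mpr ⟨j⟩
    simp only [card_singleton, singleton_inj, filter_eq, mem_univ, if_true]
    omega
  · push Not at hs
    simpa [hs] using card_le_univ s

section Colouring

variable {V : Type*} [Fintype V] [DecidableEq V] {r : ℕ} (col : V → V → Finset (Fin r))
  (hsymm : ∀ u v : V, col u v = col v u)
  (htrans : ∀ u v w : V, ∀ i : Fin r, i ∈ col u v → i ∈ col v w → u ≠ w → i ∈ col u w)

def colourSetoid (i : Fin r) : Setoid V where
  r u v := u = v ∨ i ∈ col u v
  iseqv :=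
    { refl := fun _ => Or.inl rfl
      symm := by
        rintro u v (rfl | h)
        · exact Or.inl rfl
        · exact Or.inr (hsymm u v ▸ h)
      trans := by
        rintro u v w (rfl | huv) (rfl | hvw)
        · exact Or.inl rfl
        · exact Or.inr hvw
        · exact Or.inr huv
        · exact (eq_or_ne u w).imp_right (htrans u v w i huv hvw) }

instance (i : Fin r) : DecidableRel (colourSetoid col hsymm htrans i) :=
  fun u v => inferInstanceAs (Decidable (u = v ∨ i ∈ col u v))

theorem sum_card_colour_add_mul_card_monochromatic_le :
    ∑ i, #{p : V × V | p.1 = p.2 ∨ i ∈ col p.1 p.2} +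
        (r - 1) * ∑ i, #{p : V × V | p.1 ≠ p.2 ∧ col p.1 p.2 = {i}} ≤
      r * Fintype.card V ^ 2 := by
  have hpair : ∀ p : V × V, #{i | p.1 = p.2 ∨ i ∈ col p.1 p.2} +
      (r - 1) * #{i | p.1 ≠ p.2 ∧ col p.1 p.2 = {i}} ≤ r := by
    rintro ⟨u, v⟩
    by_cases huv : u = v
    · simp [huv]
    · simpa [huv] using card_add_mul_card_filter_eq_singleton_le (col u v)
  calc _ = ∑ p : V × V, (#{i | p.1 = p.2 ∨ i ∈ col p.1 p.2} +
          (r - 1) * #{i | p.1 ≠ p.2 ∧ col p.1 p.2 = {i}}) := by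
        simp only [card_filter, mul_sum, ← sum_add_distrib]
        rw [sum_comm]
    _ ≤ ∑ _p : V × V, r := sum_le_sum fun p _ => hpair p
    _ = r * Fintype.card V ^ 2 := by simp [sq, mul_comm]

end Colouring

theorem stmt_10_general {V : Type*} [Fintype V] [DecidableEq V] (r : ℕ) (hr : 3 ≤ r)
    (col : V → V → Finset (Fin r))
    (hsymm : ∀ u v : V, col u v = col v u)
    (htrans : ∀ u v w : V, ∀ i : Fin r,
      i ∈ col u v → i ∈ col v w → u ≠ w → i ∈ col u w)
    (k : Fin r → ℕ)
    (hk : ∀ i : Fin r,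
      Set.ncard {C : Set V | ∃ v : V, C = {u : V | u = v ∨ i ∈ col u v}} = k i)
    (hk3 : ∀ i : Fin r, k i ≤ r - 1) :
    ∑ i : Fin r,
        (Set.ncard {p : V × V | p.1 ≠ p.2 ∧ col p.1 p.2 = {i}} : ℝ) ≤
      (r : ℝ) * ((r : ℝ) - 2) * (Fintype.card V : ℝ) ^ 2 / ((r : ℝ) - 1) ^ 2 := by
  set n := Fintype.card V
  set M : Fin r → ℕ := fun i => #{p : V × V | p.1 = p.2 ∨ i ∈ col p.1 p.2}
  set S := ∑ i, #{p : V × V | p.1 ≠ p.2 ∧ col p.1 p.2 = {i}}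
  have hcolour : ∀ i, n ^ 2 ≤ (r - 1) * M i := fun i =>
    ((colourSetoid col hsymm htrans i).sq_card_le_ncard_classes_mul).trans
      (Nat.mul_le_mul_right _ ((hk i).trans_le (hk3 i)))
  have hsum : r * n ^ 2 ≤ (r - 1) * ∑ i, M i := by
    simpa [mul_sum] using sum_le_sum (s := univ) fun i _ => hcolour i
  have hcount : ∑ i, M i + (r - 1) * S ≤ r * n ^ 2 :=
    sum_card_colour_add_mul_card_monochromatic_le col
  have hS : ∑ i : Fin r, (Set.ncard {p : V × V | p.1 ≠ p.2 ∧ col p.1 p.2 = {i}} : ℝ) = S := by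
    push_cast [S]
    refine sum_congr rfl fun i _ => ?_
    rw [← Set.ncard_coe_finset, coe_filter_univ]
  have hr1 : (0 : ℝ) < r - 1 := by
    have : (3 : ℝ) ≤ r := by exact_mod_cast hr
    linarith
  rw [hS, le_div_iff₀ (by positivity)]
  have hr1cast : ((r - 1 : ℕ) : ℝ) = r - 1 := Nat.cast_pred (by omega)
  have hsumℝ := (Nat.cast_le (α := ℝ)).mpr hsum
  have hcountℝ := (Nat.cast_le (α := ℝ)).mpr hcount
  push_cast [hr1cast] at hsumℝ hcountℝ
  linarith [mul_le_mul_of_nonneg_left hcountℝ hr1.le]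

/-- Multi r-edge-colored complete graph on n vertices, r ≥ 3, each
color i having exactly k_i monochromatic components with 2 ≤ k_i ≤ r − 1. Then
Σ_i m_i ≤ r(r−2)n²/(2(r−1)²), where m_i is the number of edges with color set
exactly {i}. (Counting ordered pairs doubles both sides.) -/
theorem stmt_10 {V : Type*} [Fintype V] [DecidableEq V] (r : ℕ) (hr : 3 ≤ r)
    (col : V → V → Finset (Fin r))
    (hsymm : ∀ u v : V, col u v = col v u)
    (hne : ∀ u v : V, u ≠ v → (col u v).Nonempty)
    (htrans : ∀ u v w : V, ∀ i : Fin r,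
      i ∈ col u v → i ∈ col v w → u ≠ w → i ∈ col u w)
    (k : Fin r → ℕ)
    (hk : ∀ i : Fin r,
      Set.ncard {C : Set V | ∃ v : V, C = {u : V | u = v ∨ i ∈ col u v}} = k i)
    (hk2 : ∀ i : Fin r, 2 ≤ k i) (hk3 : ∀ i : Fin r, k i ≤ r - 1) :
    ∑ i : Fin r,
        (Set.ncard {p : V × V | p.1 ≠ p.2 ∧ col p.1 p.2 = {i}} : ℝ) ≤
      (r : ℝ) * ((r : ℝ) - 2) * (Fintype.card V : ℝ) ^ 2 / ((r : ℝ) - 1) ^ 2 :=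
  stmt_10_general r hr col hsymm htrans k hk hk3
end

section
/- Let G be a multi r-edge-colored complete graph on n vertices (transitive coloring), let C be a monochromatic component of color 1 and C' a monochromatic component of color r chosen so that |C − C'| is minimum among all such pairs. Then C ∩ C' ≠ ∅. -/
/-- If C (a component of color c₁) and C' (a component of color
c_r) minimize |C − C'| over all such pairs, then C ∩ C' ≠ ∅. -/
theorem stmt_11 {V : Type*} [Fintype V] [DecidableEq V] (r : ℕ)
    (col : V → V → Finset (Fin r))
    (hsymm : ∀ u v : V, col u v = col v u)
    (htrans : ∀ u v w : V, ∀ i : Fin r,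
      i ∈ col u v → i ∈ col v w → u ≠ w → i ∈ col u w)
    (c₁ cᵣ : Fin r) (hcc : c₁ ≠ cᵣ)
    (C C' : Set V)
    (hC : ∃ v : V, C = {u : V | u = v ∨ c₁ ∈ col u v})
    (hC' : ∃ v : V, C' = {u : V | u = v ∨ cᵣ ∈ col u v})
    (hmin : ∀ D D' : Set V,
      (∃ v : V, D = {u : V | u = v ∨ c₁ ∈ col u v}) →
      (∃ v : V, D' = {u : V | u = v ∨ cᵣ ∈ col u v}) →
      (C \ C').ncard ≤ (D \ D').ncard) :
    (C ∩ C').Nonempty := by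
  by_contra h
  rw [Set.not_nonempty_iff_eq_empty] at h
  obtain ⟨v, hv⟩ := hC
  have hvC : v ∈ C := by rw [hv]; exact Or.inl rfl
  have hmin' := hmin C {u : V | u = v ∨ cᵣ ∈ col u v} ⟨v, hv⟩ ⟨v, rfl⟩
  have hfin : C.Finite := Set.toFinite C
  have h1 : (C \ {u : V | u = v ∨ cᵣ ∈ col u v}).ncard ≤ (C \ {v}).ncard := by
    apply Set.ncard_le_ncard _ hfin.diff
    intro x hx
    exact ⟨hx.1, fun hxv => hx.2 (Or.inl hxv)⟩
  have h2 : (C \ {v}).ncard < C.ncard := by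
    apply Set.ncard_lt_ncard _ hfin
    exact (Set.ssubset_iff_of_subset Set.diff_subset).2 ⟨v, hvC, by simp⟩
  have h3 : C \ C' = C := by
    ext x
    simp only [Set.mem_diff, and_iff_left_iff_imp]
    intro hx hx'
    exact Set.eq_empty_iff_forall_notMem.1 h x ⟨hx, hx'⟩
  rw [h3] at hmin'
  omega
end

section
/- Let H be an r-uniform hypergraph with r ≥ 3 in which every vertex is contained in at most 2 hyperedges (Δ(H) ≤ 2). Then τ(H) ≤ (r − 1)·ν(H), where τ is the vertex cover number and ν the matching number. -/
/-!
Fix a maximum matching `M`. By maximality every other edge meets an edge of `M`; call it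
exclusive to `e ∈ M` if `e` is the only one, shared otherwise. The edges exclusive to `e` form,
together with `e`, an intersecting family, since two disjoint ones could replace `e` in `M`.
As every vertex lies in at most two edges, `e` has at most `r` neighbours, so if `x` edges are
exclusive to `e` then at most `r - x` shared edges meet it. Each shared edge meets at least two
edges of `M`, and `r - x ≤ 2 (r - 1 - ⌈x/2⌉)` for `r ≥ 3`, so by Hall's theorem the shared edges
can be distributed among the matching edges they meet with at most `r - 1 - ⌈x/2⌉` going to `e`.
Now `r - 1` vertices handle `e` and everything charged to it: pair up the intersecting family of
exclusive edges (`⌈x/2⌉` vertices) and take a vertex of `e` in each assigned shared edge; these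
also hit `e`, and if there are none, `e` joins the intersecting family instead.
-/

open Finset

section Transversal

variable {V : Type*}

def IsTransversal (T : Finset V) (F : Finset (Finset V)) : Prop :=
  ∀ f ∈ F, ∃ v ∈ T, v ∈ f

theorem IsTransversal.mono {T T' : Finset V} {F F' : Finset (Finset V)} (hT : T ⊆ T')
    (hF : F' ⊆ F) (h : IsTransversal T F) : IsTransversal T' F' := fun f hf =>
  let ⟨v, hv, hvf⟩ := h f (hF hf); ⟨v, hT hv, hvf⟩

variable [DecidableEq V]

theorem IsTransversal.biUnion {ι : Type*} [DecidableEq ι] {s : Finset ι}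
    {T : ι → Finset V} {F : ι → Finset (Finset V)} (h : ∀ i ∈ s, IsTransversal (T i) (F i)) :
    IsTransversal (s.biUnion T) (s.biUnion F) := by
  intro f hf
  obtain ⟨i, hi, hfi⟩ := mem_biUnion.1 hf
  obtain ⟨v, hv, hvf⟩ := h i hi f hfi
  exact ⟨v, mem_biUnion.2 ⟨i, hi, hv⟩, hvf⟩

/-- Pair the members up: each pair shares a vertex. -/
theorem Set.Intersecting.exists_isTransversal {F : Finset (Finset V)}
    (hF : (F : Set (Finset V)).Intersecting) :
    ∃ T : Finset V, IsTransversal T F ∧ T.card ≤ (F.card + 1) / 2 := by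
  induction F using Finset.strongInduction with
  | H F ih =>
  rcases Nat.lt_or_ge 1 F.card with hF2 | hF1
  · obtain ⟨f, hf, g, hg, hfg⟩ := one_lt_card.1 hF2
    obtain ⟨v, hvf, hvg⟩ := Finset.not_disjoint_iff.1 (hF hf hg)
    have hsub : (F.erase f).erase g ⊂ F :=
      (erase_ssubset (mem_erase.2 ⟨hfg.symm, hg⟩)).trans_subset (erase_subset f F)
    obtain ⟨T, hT, hTcard⟩ := ih _ hsub (hF.mono (by exact_mod_cast hsub.subset))
    refine ⟨insert v T, fun h hh => ?_, ?_⟩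
    · by_cases hhf : h = f
      · exact ⟨v, mem_insert_self v T, hhf ▸ hvf⟩
      by_cases hhg : h = g
      · exact ⟨v, mem_insert_self v T, hhg ▸ hvg⟩
      obtain ⟨u, hu, huh⟩ := hT h (mem_erase.2 ⟨hhg, mem_erase.2 ⟨hhf, hh⟩⟩)
      exact ⟨u, Finset.mem_insert_of_mem hu, huh⟩
    · have := card_insert_le v T
      rw [card_erase_of_mem (mem_erase.2 ⟨hfg.symm, hg⟩), card_erase_of_mem hf] at hTcard
      omega
  · rcases F.eq_empty_or_nonempty with rfl | ⟨f, hf⟩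
    · exact ⟨∅, by simp [IsTransversal]⟩
    obtain ⟨v, hv⟩ := Finset.nonempty_iff_ne_empty.2 (hF.ne_bot hf)
    refine ⟨{v}, fun g hg => ⟨v, mem_singleton_self v, ?_⟩, ?_⟩
    · rwa [card_le_one.1 hF1 g hg f hf]
    · have := card_pos.2 ⟨f, hf⟩
      rw [Finset.card_singleton]
      omega

theorem exists_isTransversal_subset (e : Finset V) {A : Finset (Finset V)}
    (hA : ∀ f ∈ A, ¬Disjoint f e) : ∃ T ⊆ e, IsTransversal T A ∧ T.card ≤ A.card := by
  induction A using Finset.induction_on with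
  | empty => exact ⟨∅, empty_subset e, by simp [IsTransversal], by simp⟩
  | insert f A hfA ih =>
    obtain ⟨T, hTe, hT, hTcard⟩ := ih fun g hg => hA g (mem_insert_of_mem hg)
    obtain ⟨v, hvf, hve⟩ := not_disjoint_iff.1 (hA f (mem_insert_self f A))
    refine ⟨insert v T, insert_subset hve hTe, fun g hg => ?_, ?_⟩
    · rcases mem_insert.1 hg with rfl | hg
      · exact ⟨v, mem_insert_self v T, hvf⟩
      · obtain ⟨u, hu, hug⟩ := hT g hg
        exact ⟨u, mem_insert_of_mem hu, hug⟩
    · rw [card_insert_of_notMem hfA]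
      exact (card_insert_le v T).trans (by omega)

theorem exists_isTransversal_insert_union {r : ℕ} (hr : 3 ≤ r) {e : Finset V}
    {S A : Finset (Finset V)} (hS : (↑(insert e S) : Set (Finset V)).Intersecting)
    (hA : ∀ f ∈ A, ¬Disjoint f e) (hSr : S.card ≤ r) (hAr : A.card ≤ r - 1 - (S.card + 1) / 2) :
    ∃ T : Finset V, IsTransversal T (insert e S ∪ A) ∧ T.card ≤ r - 1 := by
  rcases A.eq_empty_or_nonempty with rfl | ⟨f, hf⟩
  · obtain ⟨T, hT, hTcard⟩ := hS.exists_isTransversal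
    have := card_insert_le e S
    exact ⟨T, by rwa [union_empty], by omega⟩
  · obtain ⟨T₁, hT₁, hT₁card⟩ := (hS.mono (by simp)).exists_isTransversal (F := S)
    obtain ⟨T₂, hT₂e, hT₂, hT₂card⟩ := exists_isTransversal_subset e hA
    obtain ⟨v, hv, -⟩ := hT₂ f hf
    refine ⟨T₁ ∪ T₂, ?_, (card_union_le T₁ T₂).trans (by omega)⟩
    intro g hg
    rcases mem_union.1 hg with hg | hg
    · rcases mem_insert.1 hg with rfl | hg
      · exact ⟨v, mem_union_right T₁ hv, hT₂e hv⟩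
      · exact (hT₁.mono subset_union_left subset_rfl) g hg
    · exact (hT₂.mono subset_union_right subset_rfl) g hg

end Transversal

/-- Hall's theorem for the bipartite graph between `s` and `c b` copies of each `b`: a set `u` of
items has at least `2 * #u` item–target incidences, which need at least `#u` target copies. -/
theorem exists_assignment_of_two_le_card {α β : Type*} [DecidableEq α] [DecidableEq β]
    (s : Finset α) (N : α → Finset β) (c : β → ℕ) (hN : ∀ a ∈ s, 2 ≤ (N a).card)
    (hc : ∀ b, (s.filter (b ∈ N ·)).card ≤ 2 * c b) :
    ∃ A : β → Finset α, (∀ b, ∀ a ∈ A b, b ∈ N a) ∧ (∀ b, (A b).card ≤ c b) ∧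
      ∀ a ∈ s, ∃ b, a ∈ A b := by
  let t : s → Finset (Σ _ : β, ℕ) := fun a => (N a).sigma fun b => range (c b)
  have hall : ∀ u : Finset s, u.card ≤ (u.biUnion t).card := by
    intro u
    set B := u.biUnion fun a => N a
    have hincidences : 2 * u.card ≤ ∑ b ∈ B, 2 * c b := calc
      2 * u.card = ∑ _a ∈ u, 2 := by rw [sum_const, smul_eq_mul, mul_comm]
      _ ≤ ∑ a ∈ u, (B.bipartiteAbove (fun (a : s) b => b ∈ N a) a).card := by
        refine sum_le_sum fun a ha => (hN a a.2).trans (card_le_card fun b hb => ?_)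
        exact (mem_bipartiteAbove _).2 ⟨mem_biUnion.2 ⟨a, ha, hb⟩, hb⟩
      _ = ∑ b ∈ B, (u.bipartiteBelow (fun (a : s) b => b ∈ N a) b).card :=
        sum_card_bipartiteAbove_eq_sum_card_bipartiteBelow _
      _ ≤ ∑ b ∈ B, 2 * c b := by
        refine sum_le_sum fun b _ => le_trans ?_ (hc b)
        refine card_le_card_of_injOn Subtype.val (fun a ha => ?_) Subtype.val_injective.injOn
        exact mem_filter.2 ⟨a.2, ((mem_bipartiteBelow _).1 (mem_coe.1 ha)).2⟩
    have hcopies : B.sigma (fun b => range (c b)) ⊆ u.biUnion t := by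
      intro p hp
      simp only [B, mem_sigma, mem_biUnion] at hp
      obtain ⟨⟨a, ha, hb⟩, hp⟩ := hp
      exact mem_biUnion.2 ⟨a, ha, mem_sigma.2 ⟨hb, hp⟩⟩
    calc u.card ≤ ∑ b ∈ B, c b := by rw [← mul_sum] at hincidences; omega
      _ = (B.sigma fun b => range (c b)).card := by simp
      _ ≤ (u.biUnion t).card := card_le_card hcopies
  obtain ⟨σ, hσinj, hσ⟩ := (all_card_le_biUnion_card_iff_exists_injective t).1 hall
  refine ⟨fun b => (univ.filter fun a : s => (σ a).1 = b).map (Function.Embedding.subtype _),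
    fun b a ha => ?_, fun b => ?_, fun a ha => ⟨(σ ⟨a, ha⟩).1, ?_⟩⟩
  · obtain ⟨a, ha', rfl⟩ := mem_map.1 ha
    rw [← (mem_filter.1 ha').2]
    exact (mem_sigma.1 (hσ a)).1
  · rw [card_map]
    calc _ ≤ (({b} : Finset β).sigma fun b => range (c b)).card := by
          refine card_le_card_of_injOn σ (fun a ha => ?_) hσinj.injOn
          have hab := (mem_filter.1 ha).2
          exact mem_sigma.2 ⟨mem_singleton.2 hab, hab ▸ (mem_sigma.1 (hσ a)).2⟩
      _ = c b := by simp
  · exact mem_map.2 ⟨⟨a, ha⟩, mem_filter.2 ⟨mem_univ _, rfl⟩, rfl⟩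

section Matching

variable {V : Type*} [DecidableEq V] {H M : Finset (Finset V)} {e f : Finset V}

theorem card_filter_not_disjoint_erase_le (hdeg : ∀ v : V, (H.filter fun e => v ∈ e).card ≤ 2)
    (he : e ∈ H) : ((H.erase e).filter fun f => ¬Disjoint f e).card ≤ e.card := calc
  _ ≤ (e.biUnion fun v => (H.erase e).filter fun f => v ∈ f).card := by
    refine card_le_card fun f hf => ?_
    obtain ⟨hfH, hfe⟩ := mem_filter.1 hf
    obtain ⟨v, hvf, hve⟩ := Finset.not_disjoint_iff.1 hfe
    exact mem_biUnion.2 ⟨v, hve, mem_filter.2 ⟨hfH, hvf⟩⟩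
  _ ≤ ∑ v ∈ e, ((H.erase e).filter fun f => v ∈ f).card := card_biUnion_le
  _ ≤ ∑ _v ∈ e, 1 := by
    refine sum_le_sum fun v hv => ?_
    rw [filter_erase, card_erase_of_mem (mem_filter.2 ⟨he, hv⟩)]
    exact Nat.sub_le_of_le_add (hdeg v)
  _ = e.card := by simp

structure IsMaximumMatching (H M : Finset (Finset V)) : Prop where
  subset : M ⊆ H
  pairwise_disjoint : (M : Set (Finset V)).Pairwise Disjoint
  card_le : ∀ M' ⊆ H, (M' : Set (Finset V)).Pairwise Disjoint → M'.card ≤ M.card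

theorem exists_isMaximumMatching (H : Finset (Finset V)) : ∃ M, IsMaximumMatching H M := by
  classical
  obtain ⟨M, hM, hmax⟩ := exists_max_image
    (H.powerset.filter fun M : Finset (Finset V) => (M : Set (Finset V)).Pairwise Disjoint) card
    ⟨∅, by simp⟩
  obtain ⟨hMH, hMdisj⟩ := mem_filter.1 hM
  exact ⟨M, ⟨mem_powerset.1 hMH, hMdisj, fun M' hM'H hM'disj =>
    hmax M' (mem_filter.2 ⟨mem_powerset.2 hM'H, hM'disj⟩)⟩⟩

def matchingNeighbors (M : Finset (Finset V)) (f : Finset V) : Finset (Finset V) :=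
  M.filter fun e => ¬Disjoint f e

def exclusiveEdges (H M : Finset (Finset V)) (e : Finset V) : Finset (Finset V) :=
  (H \ M).filter fun f => matchingNeighbors M f = {e}

def sharedEdges (H M : Finset (Finset V)) : Finset (Finset V) :=
  (H \ M).filter fun f => 2 ≤ (matchingNeighbors M f).card

theorem mem_matchingNeighbors : e ∈ matchingNeighbors M f ↔ e ∈ M ∧ ¬Disjoint f e :=
  mem_filter

theorem not_disjoint_of_mem_exclusiveEdges (hf : f ∈ exclusiveEdges H M e) : ¬Disjoint f e :=
  (mem_matchingNeighbors.1 ((mem_filter.1 hf).2 ▸ mem_singleton_self e)).2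

theorem disjoint_of_mem_exclusiveEdges {e' : Finset V} (hf : f ∈ exclusiveEdges H M e)
    (he' : e' ∈ M) (hne : e' ≠ e) : Disjoint f e' := by
  by_contra hfe'
  have := (mem_filter.1 hf).2 ▸ mem_matchingNeighbors.2 ⟨he', hfe'⟩
  exact hne (mem_singleton.1 this)

theorem card_exclusiveEdges_add_card_sharedEdges_le
    (hdeg : ∀ v : V, (H.filter fun e => v ∈ e).card ≤ 2) (hMH : M ⊆ H) (he : e ∈ M) :
    (exclusiveEdges H M e).card + ((sharedEdges H M).filter (e ∈ matchingNeighbors M ·)).card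
      ≤ e.card := by
  rw [← card_union_of_disjoint]
  · refine (card_le_card fun f hf => ?_).trans (card_filter_not_disjoint_erase_le hdeg (hMH he))
    obtain ⟨hfHM, hfe⟩ : f ∈ H \ M ∧ ¬Disjoint f e := by
      rcases mem_union.1 hf with hf | hf
      · exact ⟨(mem_filter.1 hf).1, not_disjoint_of_mem_exclusiveEdges hf⟩
      · exact ⟨(mem_filter.1 (mem_filter.1 hf).1).1,
          (mem_matchingNeighbors.1 (mem_filter.1 hf).2).2⟩
    obtain ⟨hfH, hfM⟩ := mem_sdiff.1 hfHM
    exact mem_filter.2 ⟨mem_erase.2 ⟨fun h => hfM (h ▸ he), hfH⟩, hfe⟩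
  · refine disjoint_left.2 fun f hexcl hshared => ?_
    have h1 := (mem_filter.1 hexcl).2
    have h2 := (mem_filter.1 (mem_filter.1 hshared).1).2
    rw [h1, card_singleton] at h2
    omega

namespace IsMaximumMatching

variable (hM : IsMaximumMatching H M)
include hM

theorem matchingNeighbors_nonempty (hf : f ∈ H \ M) : (matchingNeighbors M f).Nonempty := by
  obtain ⟨hfH, hfM⟩ := mem_sdiff.1 hf
  by_contra hempty
  have hdisj : ∀ e ∈ M, Disjoint f e := fun e he => by
    by_contra hfe
    exact hempty ⟨e, mem_matchingNeighbors.2 ⟨he, hfe⟩⟩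
  have := hM.card_le (insert f M) (insert_subset hfH hM.subset) (by
    rw [coe_insert, Set.pairwise_insert_of_symm_of_notMem hfM]
    exact ⟨hM.pairwise_disjoint, fun e he => hdisj e he⟩)
  rw [card_insert_of_notMem hfM] at this
  omega

theorem mem_exclusiveEdges_or_mem_sharedEdges (hf : f ∈ H \ M) :
    (∃ e ∈ M, f ∈ exclusiveEdges H M e) ∨ f ∈ sharedEdges H M := by
  rcases Nat.lt_or_ge 1 (matchingNeighbors M f).card with h2 | h1
  · exact Or.inr (mem_filter.2 ⟨hf, h2⟩)
  · obtain ⟨e, he⟩ := card_eq_one.1 (le_antisymm h1 (hM.matchingNeighbors_nonempty hf).card_pos)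
    have heM := (mem_matchingNeighbors.1 (he ▸ mem_singleton_self e)).1
    exact Or.inl ⟨e, heM, mem_filter.2 ⟨hf, he⟩⟩

/-- Two disjoint edges exclusive to `e` could replace `e` in the matching. -/
theorem not_disjoint_of_mem_exclusiveEdges_of_mem {g : Finset V} (he : e ∈ M)
    (hf : f ∈ exclusiveEdges H M e) (hg : g ∈ exclusiveEdges H M e) : ¬Disjoint f g := by
  intro hfg
  obtain ⟨hfH, hfM⟩ := mem_sdiff.1 (mem_filter.1 hf).1
  obtain ⟨hgH, hgM⟩ := mem_sdiff.1 (mem_filter.1 hg).1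
  have hfg_ne : f ≠ g := by
    rintro rfl
    obtain ⟨v, hvf, -⟩ := Finset.not_disjoint_iff.1 (not_disjoint_of_mem_exclusiveEdges hf)
    exact Finset.disjoint_left.1 hfg hvf hvf
  have hg' : g ∉ M.erase e := fun h => hgM (mem_of_mem_erase h)
  have hf' : f ∉ insert g (M.erase e) := by
    rw [mem_insert, not_or]
    exact ⟨hfg_ne, fun h => hfM (mem_of_mem_erase h)⟩
  have hswap := hM.card_le (insert f (insert g (M.erase e)))
    (insert_subset hfH (insert_subset hgH ((erase_subset e M).trans hM.subset))) (by
      rw [coe_insert, coe_insert, Set.pairwise_insert_of_symm_of_notMem (by exact_mod_cast hf'),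
        Set.pairwise_insert_of_symm_of_notMem (by exact_mod_cast hg')]
      refine ⟨⟨hM.pairwise_disjoint.mono (by simp), fun b hb => ?_⟩, fun b hb => ?_⟩
      · obtain ⟨hbe, hbM⟩ := mem_erase.1 hb
        exact disjoint_of_mem_exclusiveEdges hg hbM hbe
      · rcases hb with rfl | hb
        · exact hfg
        · obtain ⟨hbe, hbM⟩ := mem_erase.1 hb
          exact disjoint_of_mem_exclusiveEdges hf hbM hbe)
  rw [card_insert_of_notMem hf', card_insert_of_notMem hg', card_erase_of_mem he] at hswap
  have := card_pos.2 ⟨e, he⟩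
  omega

theorem intersecting_insert_exclusiveEdges (he : e ∈ M) (hne : e.Nonempty) :
    (↑(insert e (exclusiveEdges H M e)) : Set (Finset V)).Intersecting := by
  rw [coe_insert]
  refine Set.Intersecting.insert
    (fun f hf g hg => hM.not_disjoint_of_mem_exclusiveEdges_of_mem he hf hg) hne.ne_empty
    fun f hf => ?_
  rw [disjoint_comm]
  exact not_disjoint_of_mem_exclusiveEdges hf

theorem subset_biUnion_insert_exclusiveEdges_union {A : Finset V → Finset (Finset V)}
    (hAN : ∀ e, ∀ f ∈ A e, e ∈ matchingNeighbors M f)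
    (hAcov : ∀ f ∈ sharedEdges H M, ∃ e, f ∈ A e) :
    H ⊆ M.biUnion fun e => insert e (exclusiveEdges H M e) ∪ A e := by
  intro f hf
  by_cases hfM : f ∈ M
  · exact mem_biUnion.2 ⟨f, hfM, mem_union_left _ (mem_insert_self f _)⟩
  rcases hM.mem_exclusiveEdges_or_mem_sharedEdges (mem_sdiff.2 ⟨hf, hfM⟩) with ⟨e, he, hfe⟩ | hf
  · exact mem_biUnion.2 ⟨e, he, mem_union_left _ (mem_insert_of_mem hfe)⟩
  · obtain ⟨e, hfe⟩ := hAcov f hf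
    exact mem_biUnion.2 ⟨e, (mem_matchingNeighbors.1 (hAN e f hfe)).1, mem_union_right _ hfe⟩

end IsMaximumMatching

end Matching

theorem stmt_14_general {V : Type*} [DecidableEq V] (r : ℕ) (hr : 3 ≤ r)
    (H : Finset (Finset V))
    (hunif : ∀ e ∈ H, e.card = r)
    (hdeg : ∀ v : V, (H.filter fun e => v ∈ e).card ≤ 2)
    (ν : ℕ)
    (hν : ∀ M ⊆ H, (∀ e ∈ M, ∀ f ∈ M, e ≠ f → Disjoint e f) → M.card ≤ ν) :
    ∃ T : Finset V, (∀ e ∈ H, ∃ v ∈ T, v ∈ e) ∧ T.card ≤ (r - 1) * ν := by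
  obtain ⟨M, hM⟩ := exists_isMaximumMatching H
  have hsize : ∀ e ∈ M, (exclusiveEdges H M e).card +
      ((sharedEdges H M).filter (e ∈ matchingNeighbors M ·)).card ≤ r := fun e he =>
    hunif e (hM.subset he) ▸ card_exclusiveEdges_add_card_sharedEdges_le hdeg hM.subset he
  obtain ⟨A, hAN, hAcard, hAcov⟩ := exists_assignment_of_two_le_card (sharedEdges H M)
    (matchingNeighbors M) (fun e => r - 1 - ((exclusiveEdges H M e).card + 1) / 2)
    (fun f hf => (mem_filter.1 hf).2) fun e => by
      by_cases he : e ∈ M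
      · have := hsize e he
        omega
      · rw [filter_false_of_mem fun f _ hef => he (mem_matchingNeighbors.1 hef).1, card_empty]
        exact Nat.zero_le _
  have hlocal : ∀ e ∈ M, ∃ T : Finset V,
      IsTransversal T (insert e (exclusiveEdges H M e) ∪ A e) ∧ T.card ≤ r - 1 := fun e he =>
    exists_isTransversal_insert_union hr (hM.intersecting_insert_exclusiveEdges he
      (card_pos.1 (by rw [hunif e (hM.subset he)]; omega)))
      (fun f hf => (mem_matchingNeighbors.1 (hAN e f hf)).2) (by have := hsize e he; omega)
      (hAcard e)
  choose! T hT hTcard using hlocal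
  refine ⟨M.biUnion T, (IsTransversal.biUnion hT).mono subset_rfl
    (hM.subset_biUnion_insert_exclusiveEdges_union hAN hAcov), ?_⟩
  calc (M.biUnion T).card ≤ M.card * (r - 1) := card_biUnion_le_card_mul M T (r - 1) hTcard
    _ ≤ (r - 1) * ν := by
      rw [mul_comm]
      exact Nat.mul_le_mul_left _ (hν M hM.subset hM.pairwise_disjoint)

/-- An r-uniform hypergraph (r ≥ 3) with maximum degree at most 2
satisfies τ(H) ≤ (r − 1)·ν(H). Here ν is any upper bound on the sizes of
matchings (in particular the matching number). -/
theorem stmt_14 {V : Type*} [Fintype V] [DecidableEq V] (r : ℕ) (hr : 3 ≤ r)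
    (H : Finset (Finset V))
    (hunif : ∀ e ∈ H, e.card = r)
    (hdeg : ∀ v : V, (H.filter fun e => v ∈ e).card ≤ 2)
    (ν : ℕ)
    (hν : ∀ M ⊆ H, (∀ e ∈ M, ∀ f ∈ M, e ≠ f → Disjoint e f) → M.card ≤ ν) :
    ∃ T : Finset V, (∀ e ∈ H, ∃ v ∈ T, v ∈ e) ∧ T.card ≤ (r - 1) * ν :=
  stmt_14_general r hr H hunif hdeg ν hν
end

section
/- Let G be a graph, I a maximum independent set in G, M a maximum matching in the induced subgraph G[V(G) − I], and Y = V(G) − I − V(M). Then Y is an independent set, and the bipartite graph between Y and I contains a matching saturating Y. -/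
/-!
Two exchange arguments. If two vertices of `Y` were adjacent, the edge joining them could be added
to `M`, contradicting its maximality. For Hall's condition, if some `U ⊆ Y` had fewer than `|U|`
neighbours in `I`, then trading those neighbours for `U` would give an independent set
`(I \ Γ(U)) ∪ U` larger than `I`.
-/

open Finset

section

variable {V : Type*} [DecidableEq V]

def coveredVertices (M : Finset (V × V)) : Finset V := M.image Prod.fst ∪ M.image Prod.snd

theorem disjoint_pair_of_notMem_coveredVertices {M : Finset (V × V)} {u v : V}
    (hu : u ∉ coveredVertices M) (hv : v ∉ coveredVertices M)
    {q : V × V} (hq : q ∈ M) : Disjoint ({u, v} : Finset V) {q.1, q.2} := by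
  have hcov : ∀ w ∉ coveredVertices M, w ≠ q.1 ∧ w ≠ q.2 := by
    intro w hw
    simp only [coveredVertices, mem_union, mem_image, not_or, not_exists, not_and] at hw
    exact ⟨fun h => hw.1 q hq h.symm, fun h => hw.2 q hq h.symm⟩
  simp only [disjoint_insert_left, disjoint_singleton_left, mem_insert, mem_singleton, not_or]
  exact ⟨hcov u hu, hcov v hv⟩

theorem pairwise_disjoint_insert_of_notMem_coveredVertices {M : Finset (V × V)} {u v : V}
    (hM : ∀ p ∈ M, ∀ q ∈ M, p ≠ q → Disjoint ({p.1, p.2} : Finset V) {q.1, q.2})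
    (hu : u ∉ coveredVertices M) (hv : v ∉ coveredVertices M) :
    ∀ p ∈ insert (u, v) M, ∀ q ∈ insert (u, v) M, p ≠ q →
      Disjoint ({p.1, p.2} : Finset V) {q.1, q.2} := by
  intro p hp q hq hpq
  rcases mem_insert.mp hp with rfl | hp <;> rcases mem_insert.mp hq with rfl | hq
  · exact absurd rfl hpq
  · exact disjoint_pair_of_notMem_coveredVertices hu hv hq
  · exact (disjoint_pair_of_notMem_coveredVertices hu hv hp).symm
  · exact hM p hp q hq hpq

theorem not_adj_of_notMem_coveredVertices (G : SimpleGraph V) {I : Finset V} {M : Finset (V × V)}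
    (hMadj : ∀ p ∈ M, G.Adj p.1 p.2 ∧ p.1 ∉ I ∧ p.2 ∉ I)
    (hMdisj : ∀ p ∈ M, ∀ q ∈ M, p ≠ q → Disjoint ({p.1, p.2} : Finset V) {q.1, q.2})
    (hMmax : ∀ M' : Finset (V × V),
      (∀ p ∈ M', G.Adj p.1 p.2 ∧ p.1 ∉ I ∧ p.2 ∉ I) →
      (∀ p ∈ M', ∀ q ∈ M', p ≠ q → Disjoint ({p.1, p.2} : Finset V) {q.1, q.2}) →
      #M' ≤ #M)
    {u v : V} (huI : u ∉ I) (hvI : v ∉ I)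
    (hu : u ∉ coveredVertices M) (hv : v ∉ coveredVertices M) :
    ¬ G.Adj u v := by
  intro huv
  have huvM : (u, v) ∉ M := fun h => hu (mem_union_left _ (mem_image_of_mem Prod.fst h))
  have hedges : ∀ p ∈ insert (u, v) M, G.Adj p.1 p.2 ∧ p.1 ∉ I ∧ p.2 ∉ I := by
    intro p hp
    rcases mem_insert.mp hp with rfl | hp
    · exact ⟨huv, huI, hvI⟩
    · exact hMadj p hp
  have hle := hMmax _ hedges (pairwise_disjoint_insert_of_notMem_coveredVertices hMdisj hu hv)
  rw [card_insert_of_notMem huvM] at hle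
  omega

theorem card_le_card_biUnion_filter_adj (G : SimpleGraph V) [DecidableRel G.Adj] {I Y : Finset V}
    (hIindep : ∀ u ∈ I, ∀ v ∈ I, ¬ G.Adj u v)
    (hImax : ∀ J : Finset V, (∀ u ∈ J, ∀ v ∈ J, ¬ G.Adj u v) → #J ≤ #I)
    (hYindep : ∀ u ∈ Y, ∀ v ∈ Y, ¬ G.Adj u v) (hYI : Disjoint Y I)
    {U : Finset V} (hUY : U ⊆ Y) :
    #U ≤ #(U.biUnion fun y => I.filter (G.Adj y)) := by
  set Γ := U.biUnion fun y => I.filter (G.Adj y)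
  have hΓI : Γ ⊆ I := biUnion_subset.mpr fun _ _ => filter_subset _ _
  have hmemΓ : ∀ y ∈ U, ∀ w ∈ I, G.Adj y w → w ∈ Γ := fun y hy w hw hyw =>
    mem_biUnion.mpr ⟨y, hy, mem_filter.mpr ⟨hw, hyw⟩⟩
  have hJindep : ∀ u ∈ (I \ Γ) ∪ U, ∀ v ∈ (I \ Γ) ∪ U, ¬ G.Adj u v := by
    intro u hu v hv huv
    simp only [mem_union, mem_sdiff] at hu hv
    rcases hu with ⟨huI, huΓ⟩ | huU <;> rcases hv with ⟨hvI, hvΓ⟩ | hvU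
    · exact hIindep u huI v hvI huv
    · exact huΓ (hmemΓ v hvU u huI huv.symm)
    · exact hvΓ (hmemΓ u huU v hvI huv)
    · exact hYindep u (hUY huU) v (hUY hvU) huv
  have hUI : Disjoint (I \ Γ) U := (hYI.mono_left hUY).symm.mono_left sdiff_subset
  have hJcard : #((I \ Γ) ∪ U) = #I - #Γ + #U := by
    rw [card_union_of_disjoint hUI, card_sdiff_of_subset hΓI]
  have := hImax _ hJindep
  have := card_le_card hΓI
  omega

theorem exists_injOn_of_forall_subset_card_le_card_biUnion (Y : Finset V) (N : V → Finset V)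
    (hall : ∀ U ⊆ Y, #U ≤ #(U.biUnion N)) :
    ∃ f : V → V, Set.InjOn f Y ∧ ∀ y ∈ Y, f y ∈ N y := by
  have hall' : ∀ s : Finset Y, #s ≤ #(s.biUnion fun y => N y) := by
    intro s
    have hU := hall (s.map (Function.Embedding.subtype _)) fun y hy => by
      obtain ⟨y, -, rfl⟩ := mem_map.mp hy
      exact y.2
    rwa [card_map, map_eq_image, image_biUnion] at hU
  obtain ⟨g, hg, hgN⟩ := (all_card_le_biUnion_card_iff_existsInjective' _).mp hall'
  refine ⟨fun v => if hv : v ∈ Y then g ⟨v, hv⟩ else v, ?_, fun y hy => ?_⟩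
  · intro a ha b hb hab
    simp only [dif_pos (show a ∈ Y from ha), dif_pos (show b ∈ Y from hb)] at hab
    exact congrArg Subtype.val (hg hab)
  · simpa only [dif_pos hy] using hgN ⟨y, hy⟩

end

/-- Let I be a maximum independent set of G, M a maximum matching
of G[V − I], and Y = V − I − V(M). Then Y is independent and there is a matching
between Y and I saturating Y. -/
theorem stmt_15 {V : Type*} [Fintype V] [DecidableEq V]
    (G : SimpleGraph V)
    (I : Finset V)
    (hIindep : ∀ u ∈ I, ∀ v ∈ I, ¬ G.Adj u v)
    (hImax : ∀ J : Finset V, (∀ u ∈ J, ∀ v ∈ J, ¬ G.Adj u v) → J.card ≤ I.card)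
    (M : Finset (V × V))
    (hMadj : ∀ p ∈ M, G.Adj p.1 p.2 ∧ p.1 ∉ I ∧ p.2 ∉ I)
    (hMdisj : ∀ p ∈ M, ∀ q ∈ M, p ≠ q →
      Disjoint ({p.1, p.2} : Finset V) {q.1, q.2})
    (hMmax : ∀ M' : Finset (V × V),
      (∀ p ∈ M', G.Adj p.1 p.2 ∧ p.1 ∉ I ∧ p.2 ∉ I) →
      (∀ p ∈ M', ∀ q ∈ M', p ≠ q →
        Disjoint ({p.1, p.2} : Finset V) {q.1, q.2}) →
      M'.card ≤ M.card)
    (Y : Finset V)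
    (hY : Y = (Finset.univ \ I) \ (M.image Prod.fst ∪ M.image Prod.snd)) :
    (∀ u ∈ Y, ∀ v ∈ Y, ¬ G.Adj u v) ∧
    ∃ f : V → V, Set.InjOn f ↑Y ∧ ∀ y ∈ Y, f y ∈ I ∧ G.Adj y (f y) := by
  classical
  have hYI : ∀ y ∈ Y, y ∉ I ∧ y ∉ coveredVertices M := by
    intro y hy
    rw [hY, mem_sdiff, mem_sdiff] at hy
    exact ⟨hy.1.2, hy.2⟩
  have hYindep : ∀ u ∈ Y, ∀ v ∈ Y, ¬ G.Adj u v := fun u hu v hv =>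
    not_adj_of_notMem_coveredVertices G hMadj hMdisj hMmax
      (hYI u hu).1 (hYI v hv).1 (hYI u hu).2 (hYI v hv).2
  have hYdisjI : Disjoint Y I := disjoint_left.mpr fun y hy => (hYI y hy).1
  obtain ⟨f, hf, hfN⟩ := exists_injOn_of_forall_subset_card_le_card_biUnion Y _
    fun _ => card_le_card_biUnion_filter_adj G hIindep hImax hYindep hYdisjI
  exact ⟨hYindep, f, hf, fun y hy => mem_filter.mp (hfN y hy)⟩
end

section
/- Let G be a multi r-edge-colored complete graph (transitive coloring) in which every edge has either exactly 1 or exactly r colors. If C_1, ..., C_r are monochromatic components of colors 1, ..., r respectively with C_1 ∩ ... ∩ C_r ≠ ∅, then for every pair of distinct indices i, j we have C_i ∩ C_j = C_1 ∩ ... ∩ C_r. -/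
/-!
Transitivity makes "equal to, or joined in colour `i` to" an equivalence relation, so a
monochromatic component containing a common point `x` of all the `C k` is the component of `x`
itself. A vertex `u ≠ x` lying in `C i ∩ C j` therefore sees `x` in the two distinct colours
`i` and `j`; as an edge carries either one colour or all `r`, the edge `ux` carries every
colour and `u` lies in every `C k`.
-/

section MonoComponent

variable {V ι : Type*} (col : V → V → Finset ι)

def monoComponent (i : ι) (v : V) : Set V := {u | u = v ∨ i ∈ col u v}

variable {col}

theorem mem_monoComponent_comm (hsymm : ∀ u v : V, col u v = col v u) {i : ι} {x v : V}
    (hx : x ∈ monoComponent col i v) :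
    v ∈ monoComponent col i x := by
  rcases hx with rfl | hx
  · exact Or.inl rfl
  · exact Or.inr (hsymm x v ▸ hx)

theorem monoComponent_subset_of_mem
    (htrans : ∀ u v w : V, ∀ i : ι, i ∈ col u v → i ∈ col v w → u ≠ w → i ∈ col u w)
    {i : ι} {x v : V} (hx : x ∈ monoComponent col i v) :
    monoComponent col i x ⊆ monoComponent col i v := by
  rintro u (rfl | hu)
  · exact hx
  rcases hx with rfl | hx
  · exact Or.inr hu
  by_cases huv : u = v
  · exact Or.inl huv
  · exact Or.inr (htrans u x v i hu hx huv)

theorem monoComponent_eq_of_mem (hsymm : ∀ u v : V, col u v = col v u)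
    (htrans : ∀ u v w : V, ∀ i : ι, i ∈ col u v → i ∈ col v w → u ≠ w → i ∈ col u w)
    {i : ι} {x v : V} (hx : x ∈ monoComponent col i v) :
    monoComponent col i x = monoComponent col i v :=
  (monoComponent_subset_of_mem htrans hx).antisymm
    (monoComponent_subset_of_mem htrans (mem_monoComponent_comm hsymm hx))

end MonoComponent

theorem Finset.eq_univ_of_card_eq_one_or_card_eq_of_ne {ι : Type*} [Fintype ι] {s : Finset ι}
    (hs : s.card = 1 ∨ s.card = Fintype.card ι) {i j : ι} (hi : i ∈ s) (hj : j ∈ s)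
    (hij : i ≠ j) : s = Finset.univ := by
  have htwo : 1 < s.card := Finset.one_lt_card.mpr ⟨i, hi, j, hj, hij⟩
  exact Finset.eq_univ_of_card s (hs.resolve_left htwo.ne')

theorem stmt_18_general {V : Type*} (r : ℕ)
    (col : V → V → Finset (Fin r))
    (hsymm : ∀ u v : V, col u v = col v u)
    (htrans : ∀ u v w : V, ∀ i : Fin r,
      i ∈ col u v → i ∈ col v w → u ≠ w → i ∈ col u w)
    (hcols : ∀ u v : V, u ≠ v → (col u v).card = 1 ∨ (col u v).card = r)
    (C : Fin r → Set V)
    (hC : ∀ i : Fin r, ∃ v : V, C i = {u : V | u = v ∨ i ∈ col u v})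
    (hinter : (⋂ i : Fin r, C i).Nonempty) :
    ∀ i j : Fin r, i ≠ j → C i ∩ C j = ⋂ i : Fin r, C i := by
  obtain ⟨x, hx⟩ := hinter
  have hCx : ∀ k, C k = monoComponent col k x := fun k => by
    obtain ⟨v, hv : C k = monoComponent col k v⟩ := hC k
    rw [hv, ← monoComponent_eq_of_mem hsymm htrans (hv ▸ Set.mem_iInter.mp hx k)]
  intro i j hij
  refine (Set.subset_iInter_iff.mpr fun k => ?_).antisymm
    (Set.subset_inter (Set.iInter_subset C i) (Set.iInter_subset C j))
  rintro u ⟨hui, huj⟩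
  rw [hCx] at hui huj ⊢
  by_cases hux : u = x
  · exact Or.inl hux
  have hall : col u x = Finset.univ :=
    Finset.eq_univ_of_card_eq_one_or_card_eq_of_ne (by simpa using hcols u x hux)
      (hui.resolve_left hux) (huj.resolve_left hux) hij
  exact Or.inr (hall ▸ Finset.mem_univ k)

/-- In a multi r-edge-colored complete graph where every edge has
exactly 1 or exactly r colors, if monochromatic components C i of color i
(i = 1,…,r) have a common point, then any two of them intersect exactly in the
common intersection of all of them. -/
theorem stmt_18 {V : Type*} [Fintype V] [DecidableEq V] (r : ℕ)
    (col : V → V → Finset (Fin r))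
    (hsymm : ∀ u v : V, col u v = col v u)
    (htrans : ∀ u v w : V, ∀ i : Fin r,
      i ∈ col u v → i ∈ col v w → u ≠ w → i ∈ col u w)
    (hcols : ∀ u v : V, u ≠ v → (col u v).card = 1 ∨ (col u v).card = r)
    (C : Fin r → Set V)
    (hC : ∀ i : Fin r, ∃ v : V, C i = {u : V | u = v ∨ i ∈ col u v})
    (hinter : (⋂ i : Fin r, C i).Nonempty) :
    ∀ i j : Fin r, i ≠ j → C i ∩ C j = ⋂ i : Fin r, C i :=
  stmt_18_general r col hsymm htrans hcols C hC hinter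
end

section
/- Let G be a multi r-edge-colored complete graph on n vertices with r ≥ 3, such that every color has exactly r − 1 monochromatic components, every two components of different colors intersect in exactly n/(r−1)² vertices, and every edge has either 1 or r colors. Then any r − 1 monochromatic components of pairwise different colors cover at most (1 − (r−2)/(r−1)²)·n vertices, with equality attainable when the r−1 components share a common intersection of size n/(r−1)². -/
/-!
For each colour the monochromatic components are the classes of an equivalence relation, so they
partition the vertex set into `r - 1` parts. A component of one colour is cut by the `r - 1`
components of another colour into pieces of size `b = n / (r - 1)²`; hence every component has
`(r - 1) b` vertices and `n = (r - 1)² b`. Counting one of the given components whole and each of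
the other `r - 2` without its `b`-element intersection with the first bounds the union by
`(r - 1) b + (r - 2)² b = (1 - (r - 2) / (r - 1)²) n`. If the components share `b` common vertices,
every pairwise intersection is this common core, the parts outside it are disjoint, and the union
has exactly `b + (r - 1)(r - 2) b` vertices, which is the same number.
-/

theorem Setoid.IsPartition.ncard_eq_ncard_mul {α : Type*} [Finite α] {P : Set (Set α)}
    (hP : Setoid.IsPartition P) (s : Set α) {b : ℕ} (hb : ∀ t ∈ P, (s ∩ t).ncard = b) :
    s.ncard = P.ncard * b := by
  classical
  have : Fintype P := Fintype.ofFinite P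
  rw [hP.ncard_eq_finsum s, finsum_eq_sum_of_fintype,
    Finset.sum_congr rfl fun (t : P) _ => hb t.1 t.2, Finset.sum_const, Finset.card_univ,
    ← Nat.card_eq_fintype_card, Nat.card_coe_set_eq, smul_eq_mul]

section PartitionFamily

variable {α ι : Type*} [Finite α] [Nontrivial ι] {P : ι → Set (Set α)} {k b : ℕ}

theorem ncard_eq_mul_of_isPartition_of_ncard_inter (hP : ∀ i, Setoid.IsPartition (P i))
    (hk : ∀ i, (P i).ncard = k) (hb : ∀ i j, i ≠ j → ∀ C ∈ P i, ∀ C' ∈ P j, (C ∩ C').ncard = b)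
    {i : ι} {C : Set α} (hC : C ∈ P i) : C.ncard = k * b := by
  obtain ⟨j, hji⟩ := exists_ne i
  rw [(hP j).ncard_eq_ncard_mul C fun C' hC' => hb i j hji.symm C hC C' hC', hk j]

theorem nat_card_eq_of_isPartition_of_ncard_inter (hP : ∀ i, Setoid.IsPartition (P i))
    (hk : ∀ i, (P i).ncard = k) (hb : ∀ i j, i ≠ j → ∀ C ∈ P i, ∀ C' ∈ P j, (C ∩ C').ncard = b) :
    Nat.card α = k * (k * b) := by
  obtain ⟨i⟩ := (inferInstance : Nonempty ι)
  rw [← Set.ncard_univ, (hP i).ncard_eq_ncard_mul Set.univ fun C hC =>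
    (Set.univ_inter C).symm ▸ ncard_eq_mul_of_isPartition_of_ncard_inter hP hk hb hC, hk i]

end PartitionFamily

section SetFamily

variable {α ι : Type*} [Finite α] (I : Finset ι) (D : ι → Set α) {m : ℕ}

theorem Set.ncard_biUnion_le_of_ncard_inter {b : ℕ} (hm : ∀ i ∈ I, (D i).ncard = m)
    (hb : ∀ i ∈ I, ∀ j ∈ I, i ≠ j → (D i ∩ D j).ncard = b) :
    (⋃ i ∈ I, D i).ncard ≤ m + (I.card - 1) * (m - b) := by
  classical
  rcases I.eq_empty_or_nonempty with rfl | ⟨i₀, hi₀⟩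
  · simp
  have hcover : ⋃ i ∈ I, D i ⊆ D i₀ ∪ ⋃ i ∈ I.erase i₀, D i \ D i₀ := by
    intro x hx
    simp only [Set.mem_iUnion, Set.mem_union, Set.mem_sdiff, Finset.mem_erase] at hx ⊢
    obtain ⟨i, hi, hxi⟩ := hx
    by_cases hx₀ : x ∈ D i₀
    · exact Or.inl hx₀
    · exact Or.inr ⟨i, ⟨fun h => hx₀ (h ▸ hxi), hi⟩, hxi, hx₀⟩
  have hdiff : ∀ i ∈ I.erase i₀, (D i \ D i₀).ncard = m - b := by
    intro i hi
    obtain ⟨hne, hi⟩ := Finset.mem_erase.mp hi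
    have := Set.ncard_inter_add_ncard_sdiff_eq_ncard (D i) (D i₀)
    rw [hm i hi, hb i hi i₀ hi₀ hne] at this
    omega
  calc (⋃ i ∈ I, D i).ncard
      ≤ (D i₀ ∪ ⋃ i ∈ I.erase i₀, D i \ D i₀).ncard := Set.ncard_le_ncard hcover
    _ ≤ (D i₀).ncard + ∑ i ∈ I.erase i₀, (D i \ D i₀).ncard :=
        (Set.ncard_union_le _ _).trans (Nat.add_le_add_left (Finset.set_ncard_biUnion_le _ _) _)
    _ = m + (I.card - 1) * (m - b) := by
        rw [hm i₀ hi₀, Finset.sum_congr rfl hdiff, Finset.sum_const, Finset.card_erase_of_mem hi₀,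
          smul_eq_mul]

theorem Set.ncard_biUnion_of_inter_eq {T : Set α} (hI : I.Nonempty)
    (hm : ∀ i ∈ I, (D i).ncard = m) (hT : ∀ i ∈ I, T ⊆ D i)
    (hcore : ∀ i ∈ I, ∀ j ∈ I, i ≠ j → D i ∩ D j = T) :
    (⋃ i ∈ I, D i).ncard = T.ncard + I.card * (m - T.ncard) := by
  have hsplit : ⋃ i ∈ I, D i = T ∪ ⋃ i ∈ I, D i \ T := by
    obtain ⟨i₀, hi₀⟩ := hI
    ext x
    simp only [Set.mem_iUnion, Set.mem_union, Set.mem_sdiff, exists_prop]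
    by_cases hx : x ∈ T
    · exact iff_of_true ⟨i₀, hi₀, hT i₀ hi₀ hx⟩ (Or.inl hx)
    · simp [hx]
  have hpetals : (I : Set ι).PairwiseDisjoint fun i => D i \ T := by
    intro i hi j hj hij
    rw [Function.onFun, Set.disjoint_left]
    rintro x ⟨hxi, hxT⟩ ⟨hxj, -⟩
    exact hxT (hcore i hi j hj hij ▸ ⟨hxi, hxj⟩)
  have hdisj : Disjoint T (⋃ i ∈ I, D i \ T) := by
    simp only [Set.disjoint_iUnion_right]
    exact fun _ _ => Set.disjoint_sdiff_right
  rw [hsplit, Set.ncard_union_eq hdisj, ← Finset.set_biUnion_coe,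
    Set.Finite.ncard_biUnion I.finite_toSet (fun _ _ => Set.toFinite _) hpetals,
    finsum_mem_coe_finset, Finset.sum_congr rfl fun i hi => Set.ncard_sdiff (hT i hi),
    Finset.sum_congr rfl fun i hi => congrArg (· - T.ncard) (hm i hi), Finset.sum_const,
    smul_eq_mul]

theorem Set.ncard_biUnion_of_ncard_biInter {b : ℕ} (hI : I.Nonempty)
    (hm : ∀ i ∈ I, (D i).ncard = m) (hb : ∀ i ∈ I, ∀ j ∈ I, i ≠ j → (D i ∩ D j).ncard = b)
    (hT : (⋂ i ∈ I, D i).ncard = b) :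
    (⋃ i ∈ I, D i).ncard = b + I.card * (m - b) := by
  have hTD : ∀ i ∈ I, ⋂ i ∈ I, D i ⊆ D i := fun i hi =>
    Set.iInter₂_subset (s := fun i (_ : i ∈ I) => D i) i hi
  have hcore : ∀ i ∈ I, ∀ j ∈ I, i ≠ j → D i ∩ D j = ⋂ i ∈ I, D i := fun i hi j hj hij =>
    (Set.eq_of_subset_of_ncard_le (Set.subset_inter (hTD i hi) (hTD j hj))
      (by rw [hb i hi j hj hij, hT])).symm
  rw [Set.ncard_biUnion_of_inter_eq I D hI hm hTD hcore, hT]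

end SetFamily

-- Its `classes` are, definitionally, the sets `{u | u = v ∨ i ∈ col u v}` of the statement.
def componentSetoid {V : Type*} {r : ℕ} (col : V → V → Finset (Fin r))
    (hsymm : ∀ u v : V, col u v = col v u)
    (htrans : ∀ u v w : V, ∀ i : Fin r, i ∈ col u v → i ∈ col v w → u ≠ w → i ∈ col u w)
    (i : Fin r) : Setoid V where
  r u v := u = v ∨ i ∈ col u v
  iseqv.refl _ := Or.inl rfl
  iseqv.symm := by
    rintro u v (rfl | h)
    exacts [Or.inl rfl, Or.inr (hsymm u v ▸ h)]
  iseqv.trans := by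
    rintro u v w (rfl | huv) (rfl | hvw)
    · exact Or.inl rfl
    · exact Or.inr hvw
    · exact Or.inr huv
    · exact (eq_or_ne u w).imp id (htrans u v w i huv hvw)

theorem one_sub_div_sq_mul_sq_mul {R : Type*} [Field R] (r b : R) (hr : r - 1 ≠ 0) :
    (1 - (r - 2) / (r - 1) ^ 2) * ((r - 1) ^ 2 * b) = (r - 1) * b + (r - 2) ^ 2 * b := by
  field_simp
  ring

theorem stmt_19_general {V : Type*} [Fintype V] (r : ℕ) (hr : 3 ≤ r)
    (col : V → V → Finset (Fin r))
    (hsymm : ∀ u v : V, col u v = col v u)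
    (htrans : ∀ u v w : V, ∀ i : Fin r,
      i ∈ col u v → i ∈ col v w → u ≠ w → i ∈ col u w)
    (hcomps : ∀ i : Fin r,
      Set.ncard {C : Set V | ∃ v : V, C = {u : V | u = v ∨ i ∈ col u v}} = r - 1)
    (hinter : ∀ i j : Fin r, i ≠ j → ∀ C C' : Set V,
      (∃ v : V, C = {u : V | u = v ∨ i ∈ col u v}) →
      (∃ v : V, C' = {u : V | u = v ∨ j ∈ col u v}) →
      (r - 1) ^ 2 * (C ∩ C').ncard = Fintype.card V) :
    (∀ (I : Finset (Fin r)) (D : Fin r → Set V), I.card = r - 1 →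
      (∀ i ∈ I, ∃ v : V, D i = {u : V | u = v ∨ i ∈ col u v}) →
      (Set.ncard (⋃ i ∈ I, D i) : ℝ) ≤
        (1 - ((r : ℝ) - 2) / ((r : ℝ) - 1) ^ 2) * Fintype.card V) ∧
    (∀ (I : Finset (Fin r)) (D : Fin r → Set V), I.card = r - 1 →
      (∀ i ∈ I, ∃ v : V, D i = {u : V | u = v ∨ i ∈ col u v}) →
      (r - 1) ^ 2 * (⋂ i ∈ I, D i).ncard = Fintype.card V →
      (Set.ncard (⋃ i ∈ I, D i) : ℝ) =
        (1 - ((r : ℝ) - 2) / ((r : ℝ) - 1) ^ 2) * Fintype.card V) := by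
  obtain ⟨s, rfl⟩ : ∃ s, r = s + 3 := ⟨r - 3, by omega⟩
  simp only [show s + 3 - 1 = s + 2 from rfl] at hcomps hinter ⊢
  let P i := (componentSetoid col hsymm htrans i).classes
  have hP i : Setoid.IsPartition (P i) := Setoid.isPartition_classes _
  set b := Fintype.card V / (s + 2) ^ 2
  have hmeet : ∀ i j, i ≠ j → ∀ C ∈ P i, ∀ C' ∈ P j, (C ∩ C').ncard = b :=
    fun i j hij C hC C' hC' =>
      Nat.eq_div_of_mul_eq_right (by positivity) (hinter i j hij C C' hC hC')
  have hsize : ∀ i, ∀ C ∈ P i, C.ncard = (s + 2) * b := fun _ _ =>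
    ncard_eq_mul_of_isPartition_of_ncard_inter hP hcomps hmeet
  have hn : (Fintype.card V : ℝ) = (((s + 3 : ℕ) : ℝ) - 1) ^ 2 * b := by
    rw [← Nat.card_eq_fintype_card, nat_card_eq_of_isPartition_of_ncard_inter hP hcomps hmeet]
    push_cast
    ring
  have hpetal : (s + 2) * b - b = (s + 1) * b := Nat.sub_eq_of_eq_add (by ring)
  refine ⟨fun I D hI hD => ?_, fun I D hI hD hT => ?_⟩
  · have := Set.ncard_biUnion_le_of_ncard_inter I D (fun i hi => hsize i _ (hD i hi))
      fun i hi j hj hij => hmeet i j hij _ (hD i hi) _ (hD j hj)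
    rw [hI, show s + 2 - 1 = s + 1 from rfl, hpetal] at this
    rw [hn, one_sub_div_sq_mul_sq_mul _ _ (by push_cast; ring_nf; positivity)]
    calc ((⋃ i ∈ I, D i).ncard : ℝ) ≤ ((s + 2) * b + (s + 1) * ((s + 1) * b) : ℕ) := by
          exact_mod_cast this
      _ = _ := by push_cast; ring
  · rw [Set.ncard_biUnion_of_ncard_biInter I D (Finset.card_pos.mp (by omega))
      (fun i hi => hsize i _ (hD i hi)) (fun i hi j hj hij => hmeet i j hij _ (hD i hi) _ (hD j hj))
      (Nat.eq_div_of_mul_eq_right (by positivity) hT), hI, hpetal, hn,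
      one_sub_div_sq_mul_sq_mul _ _ (by push_cast; ring_nf; positivity)]
    push_cast
    ring

/-- In a multi r-edge-colored complete graph on n vertices (r ≥ 3)
where every color has exactly r − 1 monochromatic components, any two components
of different colors meet in exactly n/(r−1)² vertices, and every edge has 1 or r
colors, any r − 1 monochromatic components of pairwise different colors cover at
most (1 − (r−2)/(r−1)²)·n vertices, with equality when they share a common
intersection of size n/(r−1)². -/
theorem stmt_19 {V : Type*} [Fintype V] [DecidableEq V] (r : ℕ) (hr : 3 ≤ r)
    (col : V → V → Finset (Fin r))
    (hsymm : ∀ u v : V, col u v = col v u)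
    (htrans : ∀ u v w : V, ∀ i : Fin r,
      i ∈ col u v → i ∈ col v w → u ≠ w → i ∈ col u w)
    (hcomps : ∀ i : Fin r,
      Set.ncard {C : Set V | ∃ v : V, C = {u : V | u = v ∨ i ∈ col u v}} = r - 1)
    (hinter : ∀ i j : Fin r, i ≠ j → ∀ C C' : Set V,
      (∃ v : V, C = {u : V | u = v ∨ i ∈ col u v}) →
      (∃ v : V, C' = {u : V | u = v ∨ j ∈ col u v}) →
      (r - 1) ^ 2 * (C ∩ C').ncard = Fintype.card V)
    (hcols : ∀ u v : V, u ≠ v → (col u v).card = 1 ∨ (col u v).card = r) :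
    (∀ (I : Finset (Fin r)) (D : Fin r → Set V), I.card = r - 1 →
      (∀ i ∈ I, ∃ v : V, D i = {u : V | u = v ∨ i ∈ col u v}) →
      (Set.ncard (⋃ i ∈ I, D i) : ℝ) ≤
        (1 - ((r : ℝ) - 2) / ((r : ℝ) - 1) ^ 2) * Fintype.card V) ∧
    (∀ (I : Finset (Fin r)) (D : Fin r → Set V), I.card = r - 1 →
      (∀ i ∈ I, ∃ v : V, D i = {u : V | u = v ∨ i ∈ col u v}) →
      (r - 1) ^ 2 * (⋂ i ∈ I, D i).ncard = Fintype.card V →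
      (Set.ncard (⋃ i ∈ I, D i) : ℝ) =
        (1 - ((r : ℝ) - 2) / ((r : ℝ) - 1) ^ 2) * Fintype.card V) :=
  stmt_19_general r hr col hsymm htrans hcomps hinter
end
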